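/- arXiv:1903.11106 — 7 statements merged into one kernel-verified Lean document; each statement's English description precedes it below -/
import Mathlib

section
/- Let E be a finite extension of ℚ_p with ring of integers O_E and maximal ideal m_E, and let d ≥ 2 be an integer. Let Q ∈ O_E[[T]] be a power series such that Q ≡ T^d mod m_E, i.e. every coefficient of Q(T) − T^d lies in m_E. Then there exists a ∈ m_E such that Q(a) = a. -/
/-- Evaluation of a power series at a point of a normed field (convergent sum). -/
noncomputable def peval {F : Type*} [NormedField F] (f : PowerSeries F) (x : F) : F :=
  ∑' n : ℕ, (PowerSeries.coeff n f) * x ^ n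

theorem stmt_0 {p : ℕ} [Fact p.Prime] {E : Type*} [NormedField E] [CompleteSpace E]
    [IsUltrametricDist E] [Algebra ℚ_[p] E] [FiniteDimensional ℚ_[p] E]
    (hE : ∀ x : ℚ_[p], ‖algebraMap ℚ_[p] E x‖ = ‖x‖)
    (d : ℕ) (hd : 2 ≤ d) (Q : PowerSeries E)
    (hQint : ∀ n, ‖PowerSeries.coeff n Q‖ ≤ 1)
    (hQmod : ∀ n, ‖PowerSeries.coeff n (Q - PowerSeries.X ^ d)‖ < 1) :
    ∃ a : E, ‖a‖ < 1 ∧ peval Q a = a := by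
  classical
  set c : ℕ → E := fun n => PowerSeries.coeff n Q with hc
  -- coefficients 0 and 1 are small
  have hcoeff_small : ∀ n, n ≠ d → ‖c n‖ < 1 := by
    intro n hn
    have := hQmod n
    rwa [map_sub, PowerSeries.coeff_X_pow, if_neg hn, sub_zero] at this
  have hc0 : ‖c 0‖ < 1 := hcoeff_small 0 (by omega)
  have hc1 : ‖c 1‖ < 1 := hcoeff_small 1 (by omega)
  set t : ℝ := max (max ‖c 0‖ ‖c 1‖) 2⁻¹ with ht
  have ht0 : (0:ℝ) < t := lt_of_lt_of_le (by norm_num) (le_max_right _ _)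
  have ht1 : t < 1 := by
    apply max_lt (max_lt hc0 hc1) (by norm_num)
  have htc0 : ‖c 0‖ ≤ t := le_trans (le_max_left _ _) (le_max_left _ _)
  have htc1 : ‖c 1‖ ≤ t := le_trans (le_max_right _ _) (le_max_left _ _)
  -- summability on closed ball of radius t
  have hsummable : ∀ x : E, ‖x‖ ≤ t → Summable (fun n : ℕ => c n * x ^ n) := by
    intro x hx
    apply Summable.of_norm_bounded (summable_geometric_of_lt_one ht0.le ht1)
    intro n
    rw [norm_mul, norm_pow]
    calc ‖c n‖ * ‖x‖ ^ n ≤ 1 * t ^ n := by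
          exact mul_le_mul (hQint n) (pow_le_pow_left₀ (norm_nonneg _) hx n)
            (pow_nonneg (norm_nonneg _) n) zero_le_one
      _ = t ^ n := one_mul _
  -- difference of powers estimate
  have hpowdiff : ∀ (x y : E), ‖x‖ ≤ t → ‖y‖ ≤ t → ∀ n : ℕ,
      ‖x ^ n - y ^ n‖ ≤ t ^ (n - 1) * ‖x - y‖ := by
    intro x y hx hy n
    rw [← geom_sum₂_mul x y n, norm_mul]
    gcongr
    apply IsUltrametricDist.norm_sum_le_of_forall_le_of_nonneg
      (pow_nonneg ht0.le _)
    intro i hi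
    rw [Finset.mem_range] at hi
    rw [norm_mul, norm_pow, norm_pow]
    calc ‖x‖ ^ i * ‖y‖ ^ (n - 1 - i) ≤ t ^ i * t ^ (n - 1 - i) := by
          gcongr <;> exact norm_nonneg _
      _ = t ^ (i + (n - 1 - i)) := (pow_add t i _).symm
      _ = t ^ (n - 1) := by congr 1; omega
  -- Q maps the ball to the ball
  have hmaps : ∀ x : E, ‖x‖ ≤ t → ‖peval Q x‖ ≤ t := by
    intro x hx
    apply IsUltrametricDist.norm_tsum_le_of_forall_le_of_nonneg ht0.le
    intro n
    rcases Nat.eq_zero_or_pos n with rfl | hn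
    · rw [pow_zero, mul_one]; exact htc0
    rw [norm_mul, norm_pow]
    calc ‖c n‖ * ‖x‖ ^ n ≤ 1 * t ^ n := by
          exact mul_le_mul (hQint n) (pow_le_pow_left₀ (norm_nonneg _) hx n)
            (pow_nonneg (norm_nonneg _) n) zero_le_one
      _ = t ^ n := one_mul _
      _ ≤ t := pow_le_of_le_one ht0.le ht1.le (by omega)
  -- contraction estimate
  have hlip : ∀ x y : E, ‖x‖ ≤ t → ‖y‖ ≤ t →
      ‖peval Q x - peval Q y‖ ≤ t * ‖x - y‖ := by
    intro x y hx hy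
    have hdiff : peval Q x - peval Q y = ∑' n : ℕ, c n * (x ^ n - y ^ n) := by
      rw [peval, peval, ← Summable.tsum_sub (hsummable x hx) (hsummable y hy)]
      congr 1; funext n; ring
    rw [hdiff]
    apply IsUltrametricDist.norm_tsum_le_of_forall_le_of_nonneg
      (mul_nonneg ht0.le (norm_nonneg _))
    intro n
    rcases Nat.eq_zero_or_pos n with rfl | hn
    · simp [mul_nonneg ht0.le (norm_nonneg _)]
    rcases eq_or_ne n 1 with rfl | hn1
    · simp only [pow_one]
      rw [norm_mul]
      gcongr
    · -- n ≥ 2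
      rw [norm_mul]
      calc ‖c n‖ * ‖x ^ n - y ^ n‖ ≤ 1 * (t ^ (n - 1) * ‖x - y‖) := by
            exact mul_le_mul (hQint n) (hpowdiff x y hx hy n) (norm_nonneg _) zero_le_one
        _ = t ^ (n - 1) * ‖x - y‖ := one_mul _
        _ ≤ t * ‖x - y‖ := by
            gcongr
            exact pow_le_of_le_one ht0.le ht1.le (by omega)
  -- Banach fixed point on the closed ball
  set s : Set E := Metric.closedBall 0 t with hs
  have hmem : ∀ x : E, x ∈ s ↔ ‖x‖ ≤ t := by
    intro x; simp [hs, Metric.mem_closedBall, dist_zero_right]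
  have hsc : IsComplete s := (Metric.isClosed_closedBall).isComplete
  have hsf : Set.MapsTo (peval Q) s s := by
    intro x hx
    rw [hmem] at hx ⊢
    exact hmaps x hx
  have hK : (⟨t, ht0.le⟩ : NNReal) < 1 := by
    exact ht1
  have hcontr : ContractingWith ⟨t, ht0.le⟩ (hsf.restrict (peval Q) s s) := by
    constructor
    · exact hK
    · apply LipschitzWith.of_dist_le_mul
      rintro ⟨x, hx⟩ ⟨y, hy⟩
      rw [hmem] at hx hy
      simp only [Set.MapsTo.restrict, Subtype.dist_eq, dist_eq_norm]
      exact hlip x y hx hy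
  have h0s : (0:E) ∈ s := by rw [hmem]; simp [ht0.le]
  obtain ⟨a, has, hfix, -⟩ :=
    hcontr.exists_fixedPoint' hsc hsf h0s (edist_ne_top _ _)
  refine ⟨a, ?_, hfix⟩
  rw [hmem] at has
  exact lt_of_le_of_lt has ht1
end

section
/- Let E be a finite extension of ℚ_p with ring of integers O_E and maximal ideal m_E, let τ be a ℚ_p-algebra automorphism of E, and let d ≥ 2 be an integer. Let Q ∈ O_E[[T]] satisfy Q(0) = 0, Q'(0) ≠ 0 and Q ≡ T^d mod m_E, and let Q^τ denote the power series obtained by applying τ to each coefficient of Q. Suppose f ∈ O_E[[T]] is a nonzero power series whose constant term f(0) lies in m_E and which satisfies Q^τ ∘ f = f ∘ Q. Then f(0) = 0 and f'(0) ≠ 0. -/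
/-- Formal/analytic composition `f ∘ g` of power series over a normed field:
the `k`-th coefficient is the convergent sum `∑' n, (coeff n f) * coeff k (g ^ n)`.
When the constant term of `g` vanishes this is the usual formal substitution. -/
noncomputable def pcomp {F : Type*} [NormedField F] (f g : PowerSeries F) : PowerSeries F :=
  PowerSeries.mk fun k => ∑' n : ℕ, (PowerSeries.coeff n f) * (PowerSeries.coeff k (g ^ n))

open PowerSeries

lemma aux_coeff_pow_zero {F : Type*} [CommRing F] {g : PowerSeries F} {m : ℕ}
    (hg : ∀ i < m, PowerSeries.coeff i g = 0) {n k : ℕ} (hk : k < n * m) :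
    PowerSeries.coeff k (g ^ n) = 0 := by
  have h1 : (PowerSeries.X : PowerSeries F) ^ m ∣ g := PowerSeries.X_pow_dvd_iff.2 hg
  have h2 : (PowerSeries.X : PowerSeries F) ^ (n * m) ∣ g ^ n := by
    rw [mul_comm, pow_mul]
    exact pow_dvd_pow_of_dvd h1 n
  exact PowerSeries.X_pow_dvd_iff.1 h2 k hk

lemma aux_coeff_self_pow {F : Type*} [CommRing F] {g : PowerSeries F}
    (hg : PowerSeries.constantCoeff g = 0) (n : ℕ) :
    PowerSeries.coeff n (g ^ n) = (PowerSeries.coeff 1 g) ^ n := by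
  have hg1 : ∀ i < 1, PowerSeries.coeff i g = 0 := by
    intro i hi
    interval_cases i
    simpa using hg
  induction n with
  | zero => simp
  | succ n ih =>
    rw [pow_succ, pow_succ, PowerSeries.coeff_mul]
    rw [Finset.sum_eq_single (n, 1)]
    · rw [ih]
    · rintro ⟨i, j⟩ hmem hne
      replace hmem : i + j = n + 1 := by simpa using hmem
      rcases lt_trichotomy j 1 with hj | hj | hj
      · interval_cases j
        simp [PowerSeries.coeff_zero_eq_constantCoeff, hg]
      · subst hj
        have : i = n := by omega
        simp_all
      · have hi : i < n := by omega
        have : PowerSeries.coeff i (g^n) = 0 := aux_coeff_pow_zero hg1 (by omega)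
        simp [this]
    · intro h
      simp [Finset.mem_antidiagonal] at h

theorem stmt_1 {p : ℕ} [Fact p.Prime] {E : Type*} [NormedField E] [CompleteSpace E]
    [IsUltrametricDist E] [Algebra ℚ_[p] E] [FiniteDimensional ℚ_[p] E]
    (hE : ∀ x : ℚ_[p], ‖algebraMap ℚ_[p] E x‖ = ‖x‖)
    (τ : E ≃ₐ[ℚ_[p]] E) (hτ : ∀ x : E, ‖τ x‖ = ‖x‖)
    (d : ℕ) (hd : 2 ≤ d) (Q : PowerSeries E)
    (hQint : ∀ n, ‖PowerSeries.coeff n Q‖ ≤ 1)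
    (hQ0 : PowerSeries.constantCoeff Q = 0)
    (hQ1 : PowerSeries.coeff 1 Q ≠ 0)
    (hQmod : ∀ n, ‖PowerSeries.coeff n (Q - PowerSeries.X ^ d)‖ < 1)
    (f : PowerSeries E) (hfne : f ≠ 0)
    (hfint : ∀ n, ‖PowerSeries.coeff n f‖ ≤ 1)
    (hf0 : ‖PowerSeries.constantCoeff f‖ < 1)
    (hcomm : pcomp (PowerSeries.map τ.toAlgHom.toRingHom Q) f = pcomp f Q) :
    PowerSeries.constantCoeff f = 0 ∧ PowerSeries.coeff 1 f ≠ 0 := by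
  -- ‖q₁‖ < 1
  have hq1lt : ‖PowerSeries.coeff 1 Q‖ < 1 := by
    have := hQmod 1
    rwa [map_sub, PowerSeries.coeff_X_pow, if_neg (by omega), sub_zero] at this
  -- coefficient-wise form of hcomm
  have hco : ∀ k : ℕ,
      (∑' n : ℕ, τ (PowerSeries.coeff n Q) * PowerSeries.coeff k (f ^ n)) =
      ∑' n : ℕ, PowerSeries.coeff n f * PowerSeries.coeff k (Q ^ n) := by
    intro k
    have := congrArg (PowerSeries.coeff k) hcomm
    simp only [pcomp, PowerSeries.coeff_mk] at this
    rw [← this]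
    apply tsum_congr
    intro n
    rw [PowerSeries.coeff_map]
    rfl
  set a := PowerSeries.constantCoeff f with ha_def
  -- coeff 0 of f^n is a^n
  have hfpow0 : ∀ n : ℕ, PowerSeries.coeff 0 (f ^ n) = a ^ n := by
    intro n
    rw [PowerSeries.coeff_zero_eq_constantCoeff, map_pow]
  have hQpow0 : ∀ n : ℕ, n ≠ 0 → PowerSeries.coeff 0 (Q ^ n) = 0 := by
    intro n hn
    rw [PowerSeries.coeff_zero_eq_constantCoeff, map_pow, hQ0, zero_pow hn]
  -- Step 1: a = 0
  have ha : a = 0 := by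
    by_contra ha
    have hR : (∑' n : ℕ, PowerSeries.coeff n f * PowerSeries.coeff 0 (Q ^ n)) = a := by
      rw [tsum_eq_single 0 (by intro n hn; rw [hQpow0 n hn, mul_zero])]
      simp [ha_def]
    have h0 := (hco 0).trans hR
    set r : ℝ := max (‖PowerSeries.coeff 1 Q‖ * ‖a‖) (‖a‖ ^ 2) with hr_def
    have hr0 : (0:ℝ) ≤ r := le_max_of_le_right (sq_nonneg _)
    have hbound : ∀ n : ℕ,
        ‖τ (PowerSeries.coeff n Q) * PowerSeries.coeff 0 (f ^ n)‖ ≤ r := by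
      intro n
      rw [hfpow0, norm_mul, hτ, norm_pow]
      match n with
      | 0 => simp [hQ0, hr0]
      | 1 => rw [pow_one]; exact le_max_left _ _
      | (n+2) =>
          refine le_trans ?_ (le_max_right _ _)
          have h1 : ‖PowerSeries.coeff (n+2) Q‖ * ‖a‖ ^ (n+2) ≤ 1 * ‖a‖ ^ (n+2) :=
            mul_le_mul_of_nonneg_right (hQint _) (by positivity)
          rw [one_mul] at h1
          refine h1.trans ?_
          exact pow_le_pow_of_le_one (norm_nonneg _) hf0.le (by omega)
    have hle : ‖a‖ ≤ r := by
      rw [← h0]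
      exact IsUltrametricDist.norm_tsum_le_of_forall_le_of_nonneg hr0 hbound
    have hlt : r < ‖a‖ := by
      apply max_lt
      · calc ‖PowerSeries.coeff 1 Q‖ * ‖a‖ < 1 * ‖a‖ :=
              mul_lt_mul_of_pos_right hq1lt (norm_pos_iff.2 ha)
          _ = ‖a‖ := one_mul _
      · calc ‖a‖ ^ 2 = ‖a‖ * ‖a‖ := sq ‖a‖
          _ < 1 * ‖a‖ := mul_lt_mul_of_pos_right hf0 (norm_pos_iff.2 ha)
          _ = ‖a‖ := one_mul _
    exact absurd (hle.trans_lt hlt) (lt_irrefl _)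
  -- Step 2: order of f
  have hfex : ∃ n, PowerSeries.coeff n f ≠ 0 := by
    by_contra h
    push_neg at h
    exact hfne (PowerSeries.ext fun n => by simpa using h n)
  classical
  set m := Nat.find hfex with hm_def
  have hm : PowerSeries.coeff m f ≠ 0 := Nat.find_spec hfex
  have hmlt : ∀ i < m, PowerSeries.coeff i f = 0 := by
    intro i hi
    have := Nat.find_min hfex (show i < Nat.find hfex from hi)
    exact not_not.mp this
  have hm1 : 1 ≤ m := by
    rcases Nat.eq_zero_or_pos m with h | h
    · exfalso
      apply hm
      rw [h]
      show (PowerSeries.coeff 0) f = 0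
      rw [PowerSeries.coeff_zero_eq_constantCoeff]
      exact ha
    · exact h
  -- key relation at coefficient m : τ(q₁) * c = c * q₁^m
  have hQ1lt : ∀ i < 1, PowerSeries.coeff i Q = 0 := by
    intro i hi; interval_cases i; simpa using hQ0
  have hkey : τ (PowerSeries.coeff 1 Q) * PowerSeries.coeff m f =
      PowerSeries.coeff m f * (PowerSeries.coeff 1 Q) ^ m := by
    have h := hco m
    rw [tsum_eq_single 1 (by
      intro n hn
      rcases Nat.eq_zero_or_pos n with rfl | hnpos
      · simp only [pow_zero]
        rw [PowerSeries.coeff_one, if_neg (by omega), mul_zero]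
      · have h2 : 2 ≤ n := by omega
        have : PowerSeries.coeff m (f ^ n) = 0 :=
          aux_coeff_pow_zero hmlt (by nlinarith)
        rw [this, mul_zero])] at h
    rw [tsum_eq_single m (by
      intro n hn
      rcases lt_or_gt_of_ne hn with hlt | hgt
      · rw [hmlt n hlt, zero_mul]
      · have : PowerSeries.coeff m (Q ^ n) = 0 :=
          aux_coeff_pow_zero hQ1lt (by omega)
        rw [this, mul_zero])] at h
    rw [pow_one] at h
    rw [h, aux_coeff_self_pow hQ0]
  have htq : τ (PowerSeries.coeff 1 Q) = (PowerSeries.coeff 1 Q) ^ m := by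
    have := hkey
    rw [mul_comm (PowerSeries.coeff m f)] at this
    exact mul_right_cancel₀ hm this
  have hmeq : m = 1 := by
    by_contra hne
    have h2 : 2 ≤ m := by omega
    have hn : ‖PowerSeries.coeff 1 Q‖ = ‖PowerSeries.coeff 1 Q‖ ^ m := by
      rw [← norm_pow, ← htq, hτ]
    have hpos : 0 < ‖PowerSeries.coeff 1 Q‖ := norm_pos_iff.2 hQ1
    have : ‖PowerSeries.coeff 1 Q‖ ^ m < ‖PowerSeries.coeff 1 Q‖ := by
      calc ‖PowerSeries.coeff 1 Q‖ ^ m ≤ ‖PowerSeries.coeff 1 Q‖ ^ 2 :=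
            pow_le_pow_of_le_one (norm_nonneg _) hq1lt.le h2
        _ = ‖PowerSeries.coeff 1 Q‖ * ‖PowerSeries.coeff 1 Q‖ := sq _
        _ < 1 * ‖PowerSeries.coeff 1 Q‖ := mul_lt_mul_of_pos_right hq1lt hpos
        _ = ‖PowerSeries.coeff 1 Q‖ := one_mul _
    linarith [hn]
  exact ⟨ha, hmeq ▸ hm⟩
end

section
/- Let E be a finite extension of ℚ_p with ring of integers O_E, and let h ∈ O_E[[T]]. Suppose there is a sequence (v_n)_{n≥0} of nonzero elements of the maximal ideal of the ring of integers of ℂ_p such that v_p(v_n) → 0 as n → ∞ and h(v_n) = 0 for all n. Then h = 0. (Equivalently: a nonzero power series with coefficients in O_E cannot vanish on a sequence of points of the open unit disk of ℂ_p whose absolute values tend to 1.) -/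
/-- In a proper ultrametric normed field, only finitely many norm values in `[δ, 1]`. -/
lemma finite_norm_values {E : Type*} [NormedField E] [IsUltrametricDist E] [ProperSpace E]
    {δ : ℝ} (hδ : 0 < δ) : {r : ℝ | (∃ x : E, ‖x‖ = r) ∧ δ ≤ r ∧ r ≤ 1}.Finite := by
  set T : Set E := {x : E | δ ≤ ‖x‖ ∧ ‖x‖ ≤ 1} with hT
  have hTc : IsCompact T := by
    apply Metric.isCompact_of_isClosed_isBounded
    · exact (isClosed_le continuous_const continuous_norm).inter
        (isClosed_le continuous_norm continuous_const)
    · exact (Metric.isBounded_closedBall (x := (0 : E)) (r := 1)).subset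
        (fun x hx => by simpa [Metric.mem_closedBall] using hx.2)
  obtain ⟨t, ht⟩ := hTc.elim_finite_subcover (fun c : E => Metric.ball c δ)
    (fun c => Metric.isOpen_ball) (fun x hx => Set.mem_iUnion.2 ⟨x, by simpa using hδ⟩)
  apply Set.Finite.subset (t.finite_toSet.image (fun c => ‖c‖))
  rintro r ⟨⟨x, rfl⟩, hr1, hr2⟩
  have hxT : x ∈ T := ⟨hr1, hr2⟩
  obtain ⟨c, hct, hxc⟩ := Set.mem_iUnion₂.1 (ht hxT)
  refine ⟨c, hct, ?_⟩
  have hlt : ‖c - x‖ < ‖x‖ := by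
    rw [norm_sub_rev]
    exact lt_of_lt_of_le (by simpa [dist_eq_norm] using hxc) hr1
  have : ‖x + (c - x)‖ = max ‖x‖ ‖c - x‖ :=
    IsUltrametricDist.norm_add_eq_max_of_norm_ne_norm hlt.ne'
  simpa [max_eq_left hlt.le] using this

theorem stmt_3 {p : ℕ} [Fact p.Prime] {E C : Type*}
    [NormedField E] [CompleteSpace E] [IsUltrametricDist E]
    [Algebra ℚ_[p] E] [FiniteDimensional ℚ_[p] E]
    (hE : ∀ x : ℚ_[p], ‖algebraMap ℚ_[p] E x‖ = ‖x‖)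
    -- `C` is `ℂ_p`: a complete algebraically closed nonarchimedean field extension
    [NormedField C] [CompleteSpace C] [IsUltrametricDist C] [IsAlgClosed C]
    [Algebra ℚ_[p] C] [Algebra E C] [IsScalarTower ℚ_[p] E C]
    (hC : ∀ x : E, ‖algebraMap E C x‖ = ‖x‖)
    (h : PowerSeries E) (hint : ∀ n, ‖PowerSeries.coeff n h‖ ≤ 1)
    (v : ℕ → C) (hvne : ∀ n, v n ≠ 0) (hvlt : ∀ n, ‖v n‖ < 1)
    (hlim : Filter.Tendsto (fun n => ‖v n‖) Filter.atTop (nhds 1))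
    (hz : ∀ n, peval (PowerSeries.map (algebraMap E C) h) (v n) = 0) :
    h = 0 := by
  by_contra hne0
  letI : NormedSpace ℚ_[p] E :=
    { norm_smul_le := fun q x => by rw [Algebra.smul_def, norm_mul, hE] }
  haveI : ProperSpace E := FiniteDimensional.proper ℚ_[p] E
  set a : ℕ → E := fun n => PowerSeries.coeff n h with ha
  -- some coefficient is nonzero
  obtain ⟨n₀, hn₀⟩ : ∃ n, a n ≠ 0 := by
    by_contra hc
    push_neg at hc
    exact hne0 (PowerSeries.ext fun n => hc n)
  have hδ : 0 < ‖a n₀‖ := norm_pos_iff.2 hn₀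
  -- the set of coefficient norms in [‖a n₀‖, 1] is finite and nonempty; take its max
  have hfin : {r : ℝ | (∃ x : E, ‖x‖ = r) ∧ ‖a n₀‖ ≤ r ∧ r ≤ 1}.Finite := finite_norm_values hδ
  have hfin2 : {r : ℝ | (∃ n, ‖a n‖ = r) ∧ ‖a n₀‖ ≤ r}.Finite :=
    hfin.subset (by rintro r ⟨⟨n, rfl⟩, hr⟩; exact ⟨⟨a n, rfl⟩, hr, hint n⟩)
  have hne : {r : ℝ | (∃ n, ‖a n‖ = r) ∧ ‖a n₀‖ ≤ r}.Nonempty := ⟨‖a n₀‖, ⟨n₀, rfl⟩, le_refl _⟩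
  obtain ⟨s, hsmem, hsmax⟩ := Set.exists_max_image _ id hfin2 hne
  obtain ⟨⟨k₀, hk₀⟩, hs₀⟩ := hsmem
  have hspos : 0 < s := lt_of_lt_of_le hδ hs₀
  have hsle : ∀ n, ‖a n‖ ≤ s := by
    intro n
    rcases le_or_gt (‖a n‖) s with H | H
    · exact H
    · exact (hsmax (‖a n‖) ⟨⟨n, rfl⟩, le_trans hs₀ H.le⟩ : ‖a n‖ ≤ s)
  -- least index achieving the max
  have hex : ∃ k, ‖a k‖ = s := ⟨k₀, hk₀⟩
  classical
  set k := Nat.find hex with hk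
  have hks : ‖a k‖ = s := Nat.find_spec hex
  have hklt : ∀ n < k, ‖a n‖ < s := fun n hn =>
    lt_of_le_of_ne (hsle n) (Nat.find_min hex hn)
  -- s' : max of earlier coefficient norms (as nnreal sup)
  set s' : ℝ := (((Finset.range k).sup fun n => ‖a n‖₊ : NNReal) : ℝ) with hs'
  have hs'lt : s' < s := by
    rcases Nat.eq_zero_or_pos k with hk0 | hk0
    · simpa [hs', hk0] using hspos
    · rw [hs']
      have : ((Finset.range k).sup fun n => ‖a n‖₊) < ⟨s, hspos.le⟩ := by
        apply Finset.sup_lt_iff (by exact_mod_cast hspos) |>.2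
        intro n hn
        exact_mod_cast hklt n (Finset.mem_range.1 hn)
      exact_mod_cast this
  have hs'le : ∀ n < k, ‖a n‖ ≤ s' := by
    intro n hn
    have : ‖a n‖₊ ≤ (Finset.range k).sup fun n => ‖a n‖₊ :=
      Finset.le_sup (f := fun n => ‖a n‖₊) (Finset.mem_range.2 hn)
    exact_mod_cast this
  have hs'nonneg : 0 ≤ s' := by positivity
  -- pick m with ‖v m‖^k large
  have hpow : Filter.Tendsto (fun m => s * ‖v m‖ ^ k) Filter.atTop (nhds (s * 1 ^ k)) :=
    (hlim.pow k).const_mul s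
  have hev : ∀ᶠ m in Filter.atTop, s' < s * ‖v m‖ ^ k :=
    hpow.eventually (eventually_gt_nhds (by simpa using hs'lt))
  obtain ⟨m, hm⟩ := hev.exists
  set x := v m with hx
  have hx0 : 0 < ‖x‖ := norm_pos_iff.2 (hvne m)
  have hx1 : ‖x‖ < 1 := hvlt m
  -- the evaluated series
  set f : ℕ → C := fun n => algebraMap E C (a n) * x ^ n with hf
  have hfn : ∀ n, ‖f n‖ = ‖a n‖ * ‖x‖ ^ n := fun n => by
    rw [hf]; simp [norm_mul, norm_pow, hC]
  have hsum : Summable f := by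
    apply Summable.of_norm
    apply Summable.of_nonneg_of_le (fun n => norm_nonneg _) (fun n => ?_)
      (summable_geometric_of_lt_one hx0.le hx1)
    rw [hfn]
    calc ‖a n‖ * ‖x‖ ^ n ≤ 1 * ‖x‖ ^ n := by
          apply mul_le_mul_of_nonneg_right (hint n) (by positivity)
      _ = ‖x‖ ^ n := one_mul _
  have hpeval : peval (PowerSeries.map (algebraMap E C) h) x = ∑' n, f n :=
    tsum_congr fun n => by rw [hf, PowerSeries.coeff_map]
  -- split off term k
  have hsplit : ∑' n, f n = f k + ∑' n, if n = k then 0 else f n :=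
    Summable.tsum_eq_add_tsum_ite hsum k
  set B : ℝ := max s' (s * ‖x‖ ^ (k + 1)) with hB
  have hBlt : B < s * ‖x‖ ^ k := by
    rw [hB]
    apply max_lt hm
    have : ‖x‖ ^ (k+1) < ‖x‖ ^ k := by
      rw [pow_succ]
      nth_rewrite 2 [← mul_one (‖x‖ ^ k)]
      exact mul_lt_mul_of_pos_left hx1 (by positivity)
    exact mul_lt_mul_of_pos_left this hspos
  have hrest : ‖∑' n, if n = k then 0 else f n‖ ≤ B := by
    apply IsUltrametricDist.norm_tsum_le_of_forall_le_of_nonneg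
      (le_trans hs'nonneg (le_max_left _ _))
    intro n
    by_cases hnk : n = k
    · simp [hnk, le_trans hs'nonneg (le_max_left _ _)]
    · simp only [hnk, if_false]
      rw [hfn]
      rcases lt_or_gt_of_ne hnk with H | H
      · refine le_trans ?_ (le_max_left _ _)
        calc ‖a n‖ * ‖x‖ ^ n ≤ s' * 1 := by
              apply mul_le_mul (hs'le n H) (pow_le_one₀ hx0.le hx1.le) (by positivity) hs'nonneg
          _ = s' := mul_one _
      · refine le_trans ?_ (le_max_right _ _)
        apply mul_le_mul (hsle n) (pow_le_pow_of_le_one hx0.le hx1.le H)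
          (by positivity) hspos.le
  have hfk : ‖f k‖ = s * ‖x‖ ^ k := by rw [hfn, hks]
  have hdom : ‖f k + ∑' n, if n = k then 0 else f n‖ = ‖f k‖ := by
    have hne' : ‖f k‖ ≠ ‖∑' n, if n = k then 0 else f n‖ := by
      rw [hfk]
      exact (lt_of_le_of_lt hrest hBlt).ne'
    rw [IsUltrametricDist.norm_add_eq_max_of_norm_ne_norm hne']
    rw [max_eq_left]
    rw [hfk]
    exact le_of_lt (lt_of_le_of_lt hrest hBlt)
  have hval : ‖peval (PowerSeries.map (algebraMap E C) h) x‖ = s * ‖x‖ ^ k := by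
    rw [hpeval, hsplit, hdom, hfk]
  have h0 := hz m
  rw [h0, norm_zero] at hval
  exact absurd hval.symm (ne_of_gt (mul_pos hspos (pow_pos hx0 k)))
end

section
/- Let K be a finite extension of ℚ_p with ring of integers O_K. Let W be a finite subgroup of O_K^× of order d, and let ([w])_{w∈W} be a family of power series [w] ∈ T·O_K[[T]] such that [w]'(0) = w and [w] ∘ [w'] = [ww'] for all w, w' ∈ W. Set R(T) := ∏_{w∈W} [w](T) ∈ O_K[[T]]. Then for every h ∈ T·O_K[[T]] satisfying h ∘ [w] = [w] ∘ h for all w ∈ W, there exists a unique power series Γ_h ∈ O_K[[T]] such that Γ_h ∘ R = R ∘ h. Moreover Γ_h(0) = 0, Γ_h'(0) = h'(0)^d, and for any two such series h₁, h₂ one has Γ_{h₁} ∘ Γ_{h₂} = Γ_{h₁∘h₂}. -/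
namespace Stmt4Aux


open PowerSeries Finset

variable {F : Type*} [NormedField F]

theorem coeff_pow_eq_zero {g : PowerSeries F} {D : ℕ}
    (hD : ∀ k < D, coeff k g = 0) :
    ∀ n k, k < n * D → coeff k (g ^ n) = 0 := by
  intro n
  induction n with
  | zero => intro k hk; simp at hk
  | succ n ih =>
    intro k hk
    have hk' : k < n * D + D := by rw [Nat.succ_mul] at hk; exact hk
    rw [pow_succ, PowerSeries.coeff_mul]
    apply Finset.sum_eq_zero
    rintro ⟨a, b⟩ hab
    rw [Finset.HasAntidiagonal.mem_antidiagonal] at hab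
    rcases lt_or_ge a (n * D) with ha | ha
    · rw [ih a ha, zero_mul]
    · have hb : b < D := by omega
      rw [hD b hb, mul_zero]

theorem coeff_pow_eq {g : PowerSeries F} {D : ℕ} (hD : ∀ k < D, coeff k g = 0) (n : ℕ) :
    coeff (n * D) (g ^ n) = (coeff D g) ^ n := by
  induction n with
  | zero => simp
  | succ n ih =>
    rw [pow_succ, PowerSeries.coeff_mul,
      Finset.sum_eq_single_of_mem (n * D, D)
        (by rw [Finset.HasAntidiagonal.mem_antidiagonal]; exact (Nat.succ_mul n D).symm)]
    · rw [ih, pow_succ]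
    · rintro ⟨a, b⟩ hab hne
      rw [Finset.HasAntidiagonal.mem_antidiagonal] at hab
      have hab' : a + b = n * D + D := by rw [hab]; exact Nat.succ_mul n D
      rcases lt_or_ge a (n * D) with ha | ha
      · rw [coeff_pow_eq_zero hD n a ha, zero_mul]
      · rcases lt_or_ge b D with hb | hb
        · rw [hD b hb, mul_zero]
        · exact absurd (Prod.ext (by omega) (by omega)) hne

theorem lowcoeff_of_constantCoeff {g : PowerSeries F} (hg : constantCoeff g = 0) :
    ∀ k < 1, coeff k g = 0 := by
  intro k hk
  interval_cases k
  simpa [PowerSeries.coeff_zero_eq_constantCoeff] using hg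

theorem coeff_pow_eq_zero' {g : PowerSeries F} (hg : constantCoeff g = 0)
    {n k : ℕ} (h : k < n) : coeff k (g ^ n) = 0 :=
  coeff_pow_eq_zero (lowcoeff_of_constantCoeff hg) n k (by simpa using h)

theorem coeff_pow_self {g : PowerSeries F} (hg : constantCoeff g = 0) (n : ℕ) :
    coeff n (g ^ n) = (coeff 1 g) ^ n := by
  simpa using coeff_pow_eq (lowcoeff_of_constantCoeff hg) n

theorem pcomp_coeff {f g : PowerSeries F} (hg : constantCoeff g = 0) {k N : ℕ} (hk : k < N) :
    coeff k (pcomp f g) = ∑ n ∈ range N, coeff n f * coeff k (g ^ n) := by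
  rw [pcomp, PowerSeries.coeff_mk]
  exact tsum_eq_sum (fun n hn => by
    rw [coeff_pow_eq_zero' hg (lt_of_lt_of_le hk (le_of_not_gt (Finset.mem_range.not.mp hn ∘ id))), mul_zero])





open PowerSeries Finset

variable {F : Type*} [NormedField F]

theorem pcomp_sub {g : PowerSeries F} (hg : constantCoeff g = 0) (f₁ f₂ : PowerSeries F) :
    pcomp (f₁ - f₂) g = pcomp f₁ g - pcomp f₂ g := by
  ext k
  rw [map_sub, pcomp_coeff hg (Nat.lt_succ_self k), pcomp_coeff hg (Nat.lt_succ_self k),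
    pcomp_coeff hg (Nat.lt_succ_self k), ← Finset.sum_sub_distrib]
  exact Finset.sum_congr rfl fun n _ => by rw [map_sub, sub_mul]

theorem pcomp_one {g : PowerSeries F} (hg : constantCoeff g = 0) : pcomp 1 g = 1 := by
  ext k
  rw [pcomp_coeff hg (Nat.lt_succ_self k),
    Finset.sum_eq_single_of_mem 0 (Finset.mem_range.mpr k.succ_pos)]
  · simp
  · intro n _ hne
    rw [PowerSeries.coeff_one, if_neg hne, zero_mul]

theorem sum_triangle_eq {N : ℕ} (G : ℕ × ℕ → F) (hG : ∀ p : ℕ × ℕ, N ≤ p.1 + p.2 → G p = 0) :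
    ∑ s ∈ range N, ∑ p ∈ antidiagonal s, G p = ∑ n ∈ range N, ∑ m ∈ range N, G (n, m) := by
  have hdisj : Set.PairwiseDisjoint ↑(range N) (fun s : ℕ => antidiagonal s) := by
    intro s _ t _ hst
    apply Finset.disjoint_left.mpr
    intro p hps hpt
    rw [Finset.HasAntidiagonal.mem_antidiagonal] at hps hpt
    exact hst (hps ▸ hpt ▸ rfl)
  rw [← Finset.sum_biUnion hdisj, ← Finset.sum_product']
  apply Finset.sum_subset
  · intro p hp
    simp only [Finset.mem_biUnion, Finset.mem_range, Finset.HasAntidiagonal.mem_antidiagonal] at hp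
    obtain ⟨s, hs, hps⟩ := hp
    simp only [Finset.mem_product, Finset.mem_range]
    omega
  · intro p _ hnp
    apply hG
    by_contra hc
    push_neg at hc
    exact hnp (Finset.mem_biUnion.mpr
      ⟨p.1 + p.2, Finset.mem_range.mpr hc, Finset.HasAntidiagonal.mem_antidiagonal.mpr rfl⟩)

theorem pcomp_mul {g : PowerSeries F} (hg : constantCoeff g = 0) (f₁ f₂ : PowerSeries F) :
    pcomp (f₁ * f₂) g = pcomp f₁ g * pcomp f₂ g := by
  ext k
  set N := k + 1 with hN
  have hkN : k < N := Nat.lt_succ_self k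
  have key : ∀ n m : ℕ,
      ∑ p ∈ antidiagonal k, (coeff n f₁ * coeff p.1 (g ^ n)) *
        (coeff m f₂ * coeff p.2 (g ^ m))
      = coeff n f₁ * coeff m f₂ * coeff k (g ^ (n + m)) := by
    intro n m
    rw [pow_add, PowerSeries.coeff_mul, Finset.mul_sum]
    exact Finset.sum_congr rfl fun p _ => by ring
  have hRHS : coeff k (pcomp f₁ g * pcomp f₂ g)
      = ∑ n ∈ range N, ∑ m ∈ range N,
          coeff n f₁ * coeff m f₂ * coeff k (g ^ (n + m)) := by
    rw [PowerSeries.coeff_mul]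
    have : ∀ p ∈ antidiagonal k,
        coeff p.1 (pcomp f₁ g) * coeff p.2 (pcomp f₂ g)
        = ∑ n ∈ range N, ∑ m ∈ range N,
            (coeff n f₁ * coeff p.1 (g ^ n)) * (coeff m f₂ * coeff p.2 (g ^ m)) := by
      intro p hp
      rw [Finset.HasAntidiagonal.mem_antidiagonal] at hp
      rw [pcomp_coeff hg (show p.1 < N by omega), pcomp_coeff hg (show p.2 < N by omega),
        Finset.sum_mul_sum]
    rw [Finset.sum_congr rfl this, Finset.sum_comm]
    apply Finset.sum_congr rfl
    intro n _
    rw [Finset.sum_comm]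
    apply Finset.sum_congr rfl
    intro m _
    exact key n m
  have hLHS : coeff k (pcomp (f₁ * f₂) g)
      = ∑ n ∈ range N, ∑ m ∈ range N,
          coeff n f₁ * coeff m f₂ * coeff k (g ^ (n + m)) := by
    rw [pcomp_coeff hg hkN]
    have h1 : ∀ s ∈ range N, coeff s (f₁ * f₂) * coeff k (g ^ s)
        = ∑ p ∈ antidiagonal s,
            coeff p.1 f₁ * coeff p.2 f₂ * coeff k (g ^ (p.1 + p.2)) := by
      intro s _
      rw [PowerSeries.coeff_mul, Finset.sum_mul]
      exact Finset.sum_congr rfl fun p hp => by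
        rw [Finset.HasAntidiagonal.mem_antidiagonal] at hp; rw [hp]
    rw [Finset.sum_congr rfl h1]
    exact sum_triangle_eq _ (fun p hp => by
      rw [coeff_pow_eq_zero' hg (show k < p.1 + p.2 by omega), mul_zero])
  rw [hLHS, hRHS]

theorem pcomp_prod {g : PowerSeries F} (hg : constantCoeff g = 0) {ι : Type*}
    (s : Finset ι) (f : ι → PowerSeries F) :
    pcomp (∏ i ∈ s, f i) g = ∏ i ∈ s, pcomp (f i) g := by
  induction s using Finset.cons_induction with
  | empty => simpa using pcomp_one hg
  | cons a s ha ih => rw [Finset.prod_cons, Finset.prod_cons, pcomp_mul hg, ih]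

theorem pcomp_pow {g : PowerSeries F} (hg : constantCoeff g = 0) (f : PowerSeries F) (n : ℕ) :
    pcomp (f ^ n) g = (pcomp f g) ^ n := by
  induction n with
  | zero => simpa using pcomp_one hg
  | succ n ih => rw [pow_succ, pow_succ, pcomp_mul hg, ih]

theorem pcomp_constantCoeff {f g : PowerSeries F} (hf : constantCoeff f = 0)
    (hg : constantCoeff g = 0) : constantCoeff (pcomp f g) = 0 := by
  rw [← PowerSeries.coeff_zero_eq_constantCoeff, pcomp_coeff hg Nat.one_pos]
  simp [PowerSeries.coeff_zero_eq_constantCoeff, hf]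

theorem pcomp_assoc {f g h : PowerSeries F} (hg : constantCoeff g = 0)
    (hh : constantCoeff h = 0) :
    pcomp (pcomp f g) h = pcomp f (pcomp g h) := by
  have hgh : constantCoeff (pcomp g h) = 0 := pcomp_constantCoeff hg hh
  ext k
  set N := k + 1 with hN
  have hkN : k < N := Nat.lt_succ_self k
  rw [pcomp_coeff hh hkN, pcomp_coeff hgh hkN]
  have h1 : ∀ n ∈ range N, coeff n (pcomp f g) * coeff k (h ^ n)
      = ∑ m ∈ range N, coeff m f * (coeff n (g ^ m) * coeff k (h ^ n)) := by
    intro n hn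
    rw [pcomp_coeff hg (Finset.mem_range.mp hn), Finset.sum_mul]
    exact Finset.sum_congr rfl fun m _ => by ring
  have h2 : ∀ m ∈ range N, coeff m f * coeff k ((pcomp g h) ^ m)
      = ∑ n ∈ range N, coeff m f * (coeff n (g ^ m) * coeff k (h ^ n)) := by
    intro m _
    rw [← pcomp_pow hh g m, pcomp_coeff hh hkN, Finset.mul_sum]
  rw [Finset.sum_congr rfl h1, Finset.sum_congr rfl h2, Finset.sum_comm]





open PowerSeries Finset

variable {F : Type*} [NormedField F]

section Norm

variable [IsUltrametricDist F]

theorem bdd_mul {f g : PowerSeries F} (hf : ∀ n, ‖coeff n f‖ ≤ 1)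
    (hg : ∀ n, ‖coeff n g‖ ≤ 1) : ∀ n, ‖coeff n (f * g)‖ ≤ 1 := by
  intro n
  rw [PowerSeries.coeff_mul]
  apply IsUltrametricDist.norm_sum_le_of_forall_le_of_nonneg zero_le_one
  intro p _
  rw [norm_mul]
  exact mul_le_one₀ (hf p.1) (norm_nonneg _) (hg p.2)

theorem bdd_pow {f : PowerSeries F} (hf : ∀ n, ‖coeff n f‖ ≤ 1) (m : ℕ) :
    ∀ n, ‖coeff n (f ^ m)‖ ≤ 1 := by
  induction m with
  | zero =>
    intro n
    rw [pow_zero, PowerSeries.coeff_one]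
    split <;> simp
  | succ m ih =>
    rw [pow_succ]
    exact bdd_mul ih hf

theorem bdd_prod {ι : Type*} (s : Finset ι) (f : ι → PowerSeries F)
    (hf : ∀ i ∈ s, ∀ n, ‖coeff n (f i)‖ ≤ 1) : ∀ n, ‖coeff n (∏ i ∈ s, f i)‖ ≤ 1 := by
  induction s using Finset.cons_induction with
  | empty =>
    intro n
    rw [Finset.prod_empty, PowerSeries.coeff_one]
    split <;> simp
  | cons a s ha ih =>
    rw [Finset.prod_cons]
    exact bdd_mul (hf a (Finset.mem_cons_self a s))
      (ih fun i hi => hf i (Finset.mem_cons_of_mem hi))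

theorem bdd_pcomp {f g : PowerSeries F} (hg0 : constantCoeff g = 0)
    (hf : ∀ n, ‖coeff n f‖ ≤ 1) (hg : ∀ n, ‖coeff n g‖ ≤ 1) :
    ∀ n, ‖coeff n (pcomp f g)‖ ≤ 1 := by
  intro k
  rw [pcomp_coeff hg0 (Nat.lt_succ_self k)]
  apply IsUltrametricDist.norm_sum_le_of_forall_le_of_nonneg zero_le_one
  intro n _
  rw [norm_mul]
  exact mul_le_one₀ (hf n) (norm_nonneg _) (bdd_pow hg n k)

theorem norm_sub_le_one {a b : F} (ha : ‖a‖ ≤ 1) (hb : ‖b‖ ≤ 1) : ‖a - b‖ ≤ 1 := by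
  rw [sub_eq_add_neg]
  exact (IsUltrametricDist.norm_add_le_max a (-b)).trans
    (max_le ha (by rwa [norm_neg]))

end Norm

theorem prod_lowcoeff {ι : Type*} (s : Finset ι) (f : ι → PowerSeries F)
    (h0 : ∀ i ∈ s, constantCoeff (f i) = 0) :
    (∀ k < s.card, coeff k (∏ i ∈ s, f i) = 0) ∧
      coeff s.card (∏ i ∈ s, f i) = ∏ i ∈ s, coeff 1 (f i) := by
  induction s using Finset.cons_induction with
  | empty => exact ⟨fun k hk => absurd hk (by simp), by simp⟩
  | cons a s ha ih =>
    obtain ⟨ih1, ih2⟩ := ih (fun i hi => h0 i (Finset.mem_cons_of_mem hi))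
    have h0a : coeff 0 (f a) = 0 := by
      rw [PowerSeries.coeff_zero_eq_constantCoeff]
      exact h0 a (Finset.mem_cons_self a s)
    rw [Finset.prod_cons, Finset.card_cons, Finset.prod_cons]
    constructor
    · intro k hk
      rw [PowerSeries.coeff_mul]
      apply Finset.sum_eq_zero
      rintro ⟨x, y⟩ hxy
      rw [Finset.HasAntidiagonal.mem_antidiagonal] at hxy
      rcases Nat.eq_zero_or_pos x with hx | hx
      · subst hx; rw [h0a, zero_mul]
      · rw [ih1 y (by omega), mul_zero]
    · rw [PowerSeries.coeff_mul,
        Finset.sum_eq_single_of_mem (1, s.card)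
          (Finset.HasAntidiagonal.mem_antidiagonal.mpr (by omega))]
      · rw [ih2]
      · rintro ⟨x, y⟩ hxy hne
        rw [Finset.HasAntidiagonal.mem_antidiagonal] at hxy
        rcases Nat.eq_zero_or_pos x with hx | hx
        · subst hx; rw [h0a, zero_mul]
        · rcases lt_or_ge y s.card with hy | hy
          · rw [ih1 y hy, mul_zero]
          · exact absurd (Prod.ext (by omega) (by omega)) hne

theorem dvd_card_of_pow_eq_one {K : Type*} [Field K] (W : Subgroup Kˣ) [Fintype W] (m : ℕ)
    (h : ∀ w : Kˣ, w ∈ W → ((w : K)) ^ m = 1) : Nat.card W ∣ m := by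
  obtain ⟨ζ, hζ⟩ := IsCyclic.exists_generator (α := W)
  have h1 : ((ζ : Kˣ) : K) ^ m = 1 := h (ζ : Kˣ) ζ.2
  have h2 : (ζ : Kˣ) ^ m = 1 := Units.ext (by
    rw [Units.val_pow_eq_pow_val, Units.val_one]; exact h1)
  have h3 : ζ ^ m = 1 := Subtype.ext (by
    rw [SubmonoidClass.coe_pow, OneMemClass.coe_one]; exact h2)
  rw [← orderOf_eq_card_of_forall_mem_zpowers hζ]
  exact orderOf_dvd_of_pow_eq_one h3

noncomputable def gam (g R : PowerSeries F) (u : F) (d : ℕ) : ℕ → F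
  | j => (PowerSeries.coeff (j * d) g
      - ∑ i : Fin j, gam g R u d i * PowerSeries.coeff (j * d) (R ^ (i : ℕ))) / u ^ j
  termination_by j => j
  decreasing_by exact i.isLt

theorem gam_eq (g R : PowerSeries F) (u : F) (d : ℕ) (j : ℕ) :
    gam g R u d j = (PowerSeries.coeff (j * d) g
      - ∑ i ∈ range j, gam g R u d i * PowerSeries.coeff (j * d) (R ^ i)) / u ^ j := by
  rw [gam]
  congr 1
  rw [← Fin.sum_univ_eq_sum_range (fun i => gam g R u d i * coeff (j * d) (R ^ i)) j]



end Stmt4Aux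

open PowerSeries Finset Stmt4Aux in
theorem stmt_4 {p : ℕ} [Fact p.Prime] {K : Type*} [NormedField K] [CompleteSpace K]
    [IsUltrametricDist K] [Algebra ℚ_[p] K] [FiniteDimensional ℚ_[p] K]
    (hK : ∀ x : ℚ_[p], ‖algebraMap ℚ_[p] K x‖ = ‖x‖)
    -- `W` is a finite subgroup of `O_K^×` of order `d`
    (W : Subgroup Kˣ) [Fintype W] (d : ℕ) (hd : Nat.card W = d)
    (hWnorm : ∀ w : Kˣ, w ∈ W → ‖(w : K)‖ = 1)
    -- the family `([w])_{w ∈ W}` of power series in `T·O_K[[T]]`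
    (ρ : Kˣ → PowerSeries K)
    (hρ0 : ∀ w ∈ W, PowerSeries.constantCoeff (ρ w) = 0)
    (hρint : ∀ w ∈ W, ∀ n, ‖PowerSeries.coeff n (ρ w)‖ ≤ 1)
    (hρ1 : ∀ w ∈ W, PowerSeries.coeff 1 (ρ w) = (w : K))
    (hρmul : ∀ w ∈ W, ∀ w' ∈ W, pcomp (ρ w) (ρ w') = ρ (w * w'))
    -- `R(T) = ∏_{w ∈ W} [w](T)`
    (R : PowerSeries K) (hR : R = ∏ w : W, ρ (w : Kˣ)) :
    (∀ h : PowerSeries K, PowerSeries.constantCoeff h = 0 →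
      (∀ n, ‖PowerSeries.coeff n h‖ ≤ 1) →
      (∀ w ∈ W, pcomp h (ρ w) = pcomp (ρ w) h) →
      (∃! Γ : PowerSeries K, (∀ n, ‖PowerSeries.coeff n Γ‖ ≤ 1) ∧
          pcomp Γ R = pcomp R h) ∧
      (∀ Γ : PowerSeries K, (∀ n, ‖PowerSeries.coeff n Γ‖ ≤ 1) →
        pcomp Γ R = pcomp R h →
        PowerSeries.constantCoeff Γ = 0 ∧
          PowerSeries.coeff 1 Γ = (PowerSeries.coeff 1 h) ^ d)) ∧
    (∀ h₁ h₂ Γ₁ Γ₂ Γ₃ : PowerSeries K,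
      PowerSeries.constantCoeff h₁ = 0 → (∀ n, ‖PowerSeries.coeff n h₁‖ ≤ 1) →
      (∀ w ∈ W, pcomp h₁ (ρ w) = pcomp (ρ w) h₁) →
      PowerSeries.constantCoeff h₂ = 0 → (∀ n, ‖PowerSeries.coeff n h₂‖ ≤ 1) →
      (∀ w ∈ W, pcomp h₂ (ρ w) = pcomp (ρ w) h₂) →
      (∀ n, ‖PowerSeries.coeff n Γ₁‖ ≤ 1) → pcomp Γ₁ R = pcomp R h₁ →
      (∀ n, ‖PowerSeries.coeff n Γ₂‖ ≤ 1) → pcomp Γ₂ R = pcomp R h₂ →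
      (∀ n, ‖PowerSeries.coeff n Γ₃‖ ≤ 1) → pcomp Γ₃ R = pcomp R (pcomp h₁ h₂) →
      pcomp Γ₁ Γ₂ = Γ₃) := by
  classical
  have hd1 : 0 < d := hd ▸ Nat.card_pos
  have hcard : (Finset.univ : Finset W).card = d := by
    rw [Finset.card_univ, ← Nat.card_eq_fintype_card, hd]
  obtain ⟨hRlow', hRd'⟩ := prod_lowcoeff (Finset.univ : Finset W)
    (fun w : W => ρ (w : Kˣ)) (fun w _ => hρ0 (w : Kˣ) w.2)
  set u : K := ∏ w : W, PowerSeries.coeff 1 (ρ (w : Kˣ)) with hu_def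
  have hRlow : ∀ k < d, PowerSeries.coeff k R = 0 := by
    intro k hk
    rw [hR]
    exact hRlow' k (hcard ▸ hk)
  have hRd : PowerSeries.coeff d R = u := by
    rw [hR, ← hcard]
    exact hRd'
  have hRc : PowerSeries.constantCoeff R = 0 := by
    rw [← PowerSeries.coeff_zero_eq_constantCoeff]
    exact hRlow 0 hd1
  have hu1 : ‖u‖ = 1 := by
    rw [hu_def, norm_prod]
    exact Finset.prod_eq_one fun w _ => by rw [hρ1 (w : Kˣ) w.2]; exact hWnorm (w : Kˣ) w.2
  have hu0 : u ≠ 0 := by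
    intro hc
    rw [hc, norm_zero] at hu1
    exact zero_ne_one hu1
  have hRbdd : ∀ n, ‖PowerSeries.coeff n R‖ ≤ 1 := by
    rw [hR]
    exact bdd_prod _ _ fun w _ => hρint (w : Kˣ) w.2
  have hRinv : ∀ w ∈ W, pcomp R (ρ w) = R := by
    intro w hw
    rw [hR, pcomp_prod (hρ0 w hw),
      Finset.prod_congr rfl (fun w' (_ : w' ∈ Finset.univ) => hρmul _ w'.2 w hw)]
    exact Fintype.prod_equiv (Equiv.mulRight (⟨w, hw⟩ : W)) _ _ (fun x => rfl)
  have hjled : ∀ j : ℕ, j ≤ j * d := fun j => by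
    calc j = j * 1 := (mul_one j).symm
    _ ≤ j * d := Nat.mul_le_mul_left j hd1
  -- injectivity of composition with R
  have hinj : ∀ Δ : PowerSeries K, pcomp Δ R = 0 → Δ = 0 := by
    intro Δ hΔ
    by_contra hne
    have hex : ∃ n, PowerSeries.coeff n Δ ≠ 0 := by
      by_contra hc
      push_neg at hc
      exact hne (PowerSeries.ext fun n => by rw [hc n, map_zero])
    have hj := Nat.find_spec hex
    set j := Nat.find hex with hjdef
    have hmin : ∀ i, i < j → PowerSeries.coeff i Δ = 0 :=
      fun i hi => of_not_not (Nat.find_min hex hi)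
    have hco := congrArg (PowerSeries.coeff (j * d)) hΔ
    rw [map_zero, pcomp_coeff hRc (Nat.lt_succ_self (j * d)),
      Finset.sum_eq_single_of_mem j (Finset.mem_range.mpr (by have := hjled j; omega))
        (fun n _ hne' => by
          rcases lt_or_gt_of_ne hne' with hlt | hgt
          · rw [hmin n hlt, zero_mul]
          · rw [coeff_pow_eq_zero hRlow n (j * d)
              (mul_lt_mul_of_pos_right hgt hd1), mul_zero])] at hco
    rw [coeff_pow_eq hRlow j, hRd] at hco
    exact hj ((mul_eq_zero.mp hco).resolve_right (pow_ne_zero j hu0))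
  -- part B : values of constant and first coefficients
  have partB : ∀ h : PowerSeries K, PowerSeries.constantCoeff h = 0 →
      ∀ Γ : PowerSeries K, pcomp Γ R = pcomp R h →
      PowerSeries.constantCoeff Γ = 0 ∧
        PowerSeries.coeff 1 Γ = (PowerSeries.coeff 1 h) ^ d := by
    intro h hh0 Γ he
    constructor
    · have h0 := congrArg (PowerSeries.coeff 0) he
      rw [pcomp_coeff hRc Nat.one_pos, pcomp_coeff hh0 Nat.one_pos] at h0
      simp only [Finset.range_one, Finset.sum_singleton, pow_zero,
        PowerSeries.coeff_zero_eq_constantCoeff, map_one, mul_one, hRc] at h0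
      exact h0
    · have hdc := congrArg (PowerSeries.coeff d) he
      have hL : PowerSeries.coeff d (pcomp Γ R) = PowerSeries.coeff 1 Γ * u := by
        rw [pcomp_coeff hRc (Nat.lt_succ_self d),
          Finset.sum_eq_single_of_mem 1 (Finset.mem_range.mpr (by omega))
            (fun n _ hne' => by
              rcases Nat.lt_or_ge n 1 with h1 | h1
              · interval_cases n
                rw [pow_zero, PowerSeries.coeff_one, if_neg (by omega), mul_zero]
              · have h2 : 2 ≤ n := by omega
                rw [coeff_pow_eq_zero hRlow n d
                  (by simpa using mul_lt_mul_of_pos_right (show (1:ℕ) < n by omega) hd1),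
                  mul_zero]),
          pow_one, hRd]
      have hRside : PowerSeries.coeff d (pcomp R h)
          = u * (PowerSeries.coeff 1 h) ^ d := by
        rw [pcomp_coeff hh0 (Nat.lt_succ_self d),
          Finset.sum_eq_single_of_mem d (Finset.mem_range.mpr (Nat.lt_succ_self d))
            (fun n hn hne' => by
              rw [hRlow n (by rw [Finset.mem_range] at hn; omega), zero_mul]),
          hRd, coeff_pow_self hh0 d]
      rw [hL, hRside] at hdc
      exact mul_right_cancel₀ hu0 (hdc.trans (mul_comm u _))
  -- main existence
  have main : ∀ h : PowerSeries K, PowerSeries.constantCoeff h = 0 →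
      (∀ n, ‖PowerSeries.coeff n h‖ ≤ 1) →
      (∀ w ∈ W, pcomp h (ρ w) = pcomp (ρ w) h) →
      ∃ Γ : PowerSeries K, (∀ n, ‖PowerSeries.coeff n Γ‖ ≤ 1) ∧
        pcomp Γ R = pcomp R h := by
    intro h hh0 hhb hcomm
    set g : PowerSeries K := pcomp R h with hg_def
    have hgbdd : ∀ n, ‖PowerSeries.coeff n g‖ ≤ 1 := bdd_pcomp hh0 hRbdd hhb
    have hginv : ∀ w ∈ W, pcomp g (ρ w) = g := by
      intro w hw
      rw [hg_def, pcomp_assoc hh0 (hρ0 w hw), hcomm w hw, ← pcomp_assoc (hρ0 w hw) hh0,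
        hRinv w hw]
    set Γ : PowerSeries K := PowerSeries.mk (gam g R u d) with hΓ_def
    have hbddc : ∀ j, ‖gam g R u d j‖ ≤ 1 := by
      intro j
      induction j using Nat.strong_induction_on with
      | _ j ih =>
        rw [gam_eq, norm_div, norm_pow, hu1, one_pow, div_one]
        apply norm_sub_le_one (hgbdd _)
        apply IsUltrametricDist.norm_sum_le_of_forall_le_of_nonneg zero_le_one
        intro i hi
        rw [norm_mul]
        exact mul_le_one₀ (ih i (Finset.mem_range.mp hi)) (norm_nonneg _)
          (bdd_pow hRbdd i _)
    have hkeyd : ∀ j, PowerSeries.coeff (j * d) (pcomp Γ R)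
        = PowerSeries.coeff (j * d) g := by
      intro j
      rw [pcomp_coeff hRc (Nat.lt_succ_self (j * d))]
      have hsub : range (j + 1) ⊆ range (j * d + 1) := by
        intro x hx
        rw [Finset.mem_range] at *
        have := hjled j
        omega
      rw [← Finset.sum_subset hsub (fun n hn hnn => by
        have hnn' : ¬ n < j + 1 := fun hc => hnn (Finset.mem_range.mpr hc)
        have hjn : j < n := by omega
        rw [coeff_pow_eq_zero hRlow n (j * d)
          (mul_lt_mul_of_pos_right hjn hd1), mul_zero])]
      rw [Finset.sum_range_succ,
        Finset.sum_congr rfl (fun n (_ : n ∈ range j) => by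
          rw [hΓ_def, PowerSeries.coeff_mk]),
        hΓ_def, PowerSeries.coeff_mk, coeff_pow_eq hRlow j, hRd, gam_eq,
        div_mul_cancel₀ _ (pow_ne_zero j hu0)]
      ring
    have hEzero : ∀ m, PowerSeries.coeff m (g - pcomp Γ R) = 0 := by
      intro m
      induction m using Nat.strong_induction_on with
      | _ m ih =>
        rcases em (d ∣ m) with ⟨j, hj⟩ | hnd
        · subst hj
          rw [map_sub, mul_comm d j, hkeyd j, sub_self]
        · have hEinv : ∀ w ∈ W, pcomp (g - pcomp Γ R) (ρ w) = g - pcomp Γ R := by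
            intro w hw
            rw [pcomp_sub (hρ0 w hw), hginv w hw, pcomp_assoc hRc (hρ0 w hw), hRinv w hw]
          have hwm : ∀ w : Kˣ, w ∈ W →
              PowerSeries.coeff m (g - pcomp Γ R) * ((w : K)) ^ m
                = PowerSeries.coeff m (g - pcomp Γ R) := by
            intro w hw
            have hcg := congrArg (PowerSeries.coeff m) (hEinv w hw)
            rw [pcomp_coeff (hρ0 w hw) (Nat.lt_succ_self m), Finset.sum_range_succ,
              Finset.sum_eq_zero (fun n hn => by
                rw [ih n (Finset.mem_range.mp hn), zero_mul]),
              zero_add, coeff_pow_self (hρ0 w hw) m, hρ1 w hw] at hcg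
            exact hcg
          by_contra hEm
          have h1 : ∀ w : Kˣ, w ∈ W → ((w : K)) ^ m = 1 := fun w hw =>
            mul_left_cancel₀ hEm (by rw [hwm w hw, mul_one])
          exact hnd (hd ▸ dvd_card_of_pow_eq_one W m h1)
    have hΓR : pcomp Γ R = g := by
      ext m
      have hm := hEzero m
      rw [map_sub, sub_eq_zero] at hm
      exact hm.symm
    exact ⟨Γ, fun n => by rw [hΓ_def, PowerSeries.coeff_mk]; exact hbddc n, hΓR⟩
  constructor
  · intro h hh0 hhb hcomm
    obtain ⟨Γ, hb, he⟩ := main h hh0 hhb hcomm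
    refine ⟨⟨Γ, ⟨hb, he⟩, ?_⟩, fun Γ' _ he' => partB h hh0 Γ' he'⟩
    rintro Γ' ⟨_, he'⟩
    have := hinj (Γ' - Γ) (by rw [pcomp_sub hRc, he, he', sub_self])
    exact sub_eq_zero.mp this
  · intro h₁ h₂ Γ₁ Γ₂ Γ₃ hh₁0 hh₁b hc₁ hh₂0 hh₂b hc₂ hb₁ he₁ hb₂ he₂ hb₃ he₃
    have hΓ₂0 : PowerSeries.constantCoeff Γ₂ = 0 := (partB h₂ hh₂0 Γ₂ he₂).1
    have key : pcomp (pcomp Γ₁ Γ₂) R = pcomp Γ₃ R := by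
      rw [pcomp_assoc hΓ₂0 hRc, he₂, ← pcomp_assoc hRc hh₂0, he₁,
        pcomp_assoc hh₁0 hh₂0, he₃]
    have := hinj (pcomp Γ₁ Γ₂ - Γ₃) (by rw [pcomp_sub hRc, key, sub_self])
    exact sub_eq_zero.mp this
end

section
/- Let K be a finite extension of ℚ_p with ring of integers O_K, maximal ideal m_K, and residue field of cardinality q. Let ([a])_{a∈O_K} be a family of power series [a] ∈ T·O_K[[T]] with [a]'(0) = a and [a] ∘ [b] = [ab] for all a, b ∈ O_K, and suppose that for some α ∈ m_K \ {0} one has [α] ≡ T^q mod m_K. Let W be a finite subgroup of O_K^× of order d, let R(T) := ∏_{w∈W} [w](T), and for a ∈ O_K let Γ_a ∈ O_K[[T]] be the unique power series with Γ_a ∘ R = R ∘ [a]. Then for all k, ℓ ∈ O_K^×: Γ_k = Γ_ℓ if and only if k^d = ℓ^d (equivalently, if and only if Γ_k'(0) = Γ_ℓ'(0)). -/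
/-- The residue field of the nonarchimedean field `K` has cardinality `q`:
there is a complete set of `q` residue representatives in the ring of integers. -/
def HasResidueCard (K : Type*) [NormedField K] (q : ℕ) : Prop :=
  ∃ S : Finset K, S.card = q ∧ (∀ x ∈ S, ‖x‖ ≤ 1) ∧
    (∀ x ∈ S, ∀ y ∈ S, x ≠ y → 1 ≤ ‖x - y‖) ∧
    ∀ z : K, ‖z‖ ≤ 1 → ∃ x ∈ S, ‖z - x‖ < 1

namespace PcompAux

open PowerSeries Finset

variable {F : Type*} [NormedField F]

lemma coeff_pow_eq_zero {g : PowerSeries F} (hg : constantCoeff g = 0)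
    {m n : ℕ} (h : m < n) : coeff m (g ^ n) = 0 :=
  PowerSeries.X_pow_dvd_iff.mp (pow_dvd_pow_of_dvd (PowerSeries.X_dvd_iff.mpr hg) n) m h

lemma pcomp_coeff' (f g : PowerSeries F) (hg : constantCoeff g = 0)
    {k N : ℕ} (hkN : k < N) :
    coeff k (pcomp f g) = ∑ n ∈ range N, coeff n f * coeff k (g ^ n) := by
  rw [pcomp, coeff_mk]
  refine tsum_eq_sum fun n hn => ?_
  rw [coeff_pow_eq_zero hg (hkN.trans_le (le_of_not_gt fun h => hn (mem_range.mpr h))),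
    mul_zero]

noncomputable def pev (P : Polynomial F) (g : PowerSeries F) : PowerSeries F :=
  Polynomial.eval₂ (PowerSeries.C) g P

lemma coeff_pev (P : Polynomial F) (g : PowerSeries F) (hg : constantCoeff g = 0)
    {k N : ℕ} (hkN : k < N) :
    coeff k (pev P g) = ∑ n ∈ range N, P.coeff n * coeff k (g ^ n) := by
  rw [pev, Polynomial.eval₂_eq_sum, Polynomial.sum, map_sum]
  simp_rw [coeff_C_mul]
  refine (Finset.sum_subset Finset.subset_union_left fun n _ hn => ?_).trans
    (Finset.sum_subset Finset.subset_union_right fun n _ hn => ?_).symm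
  · rw [Polynomial.notMem_support_iff.mp hn, zero_mul]
  · rw [coeff_pow_eq_zero hg (hkN.trans_le (le_of_not_gt fun h => hn (mem_range.mpr h))),
      mul_zero]

lemma pcomp_eq_pev (f g : PowerSeries F) (hg : constantCoeff g = 0)
    {k N : ℕ} (hkN : k < N) :
    coeff k (pcomp f g) = coeff k (pev (trunc N f) g) := by
  rw [pcomp_coeff' f g hg hkN, coeff_pev _ g hg hkN]
  refine sum_congr rfl fun n hn => ?_
  rw [coeff_trunc, if_pos (mem_range.mp hn)]

lemma pcomp_one (g : PowerSeries F) : pcomp (1 : PowerSeries F) g = 1 := by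
  ext k
  rw [pcomp, coeff_mk, tsum_eq_single 0 (fun n hn => by
    rw [PowerSeries.coeff_one, if_neg hn, zero_mul])]
  simp

lemma pcomp_mul (f₁ f₂ g : PowerSeries F) (hg : constantCoeff g = 0) :
    pcomp (f₁ * f₂) g = pcomp f₁ g * pcomp f₂ g := by
  ext k
  have hk : k < k + 1 := Nat.lt_succ_self k
  rw [pcomp_eq_pev _ _ hg hk]
  have step1 : coeff k (pev (trunc (k+1) (f₁ * f₂)) g)
      = coeff k (pev (trunc (k+1) f₁ * trunc (k+1) f₂) g) := by
    rw [coeff_pev _ g hg hk, coeff_pev _ g hg hk]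
    refine sum_congr rfl fun n hn => ?_
    have hnk : n < k + 1 := mem_range.mp hn
    rw [coeff_trunc, if_pos hnk]
    congr 1
    rw [← Polynomial.coeff_coe, Polynomial.coe_mul]
    exact coeff_mul_eq_coeff_trunc_mul_trunc f₁ f₂ hnk
  rw [step1, pev, Polynomial.eval₂_mul]
  rw [PowerSeries.coeff_mul, PowerSeries.coeff_mul]
  refine sum_congr rfl fun p hp => ?_
  have hpk : p.1 + p.2 = k := mem_antidiagonal.mp hp
  have h1 : p.1 < k + 1 := by omega
  have h2 : p.2 < k + 1 := by omega
  rw [← pev, ← pev, ← pcomp_eq_pev f₁ g hg h1, ← pcomp_eq_pev f₂ g hg h2]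

lemma pcomp_pow (f g : PowerSeries F) (hg : constantCoeff g = 0) (n : ℕ) :
    pcomp (f ^ n) g = (pcomp f g) ^ n := by
  induction n with
  | zero => simpa using pcomp_one g
  | succ n ih => rw [pow_succ, pow_succ, pcomp_mul _ _ _ hg, ih]

lemma pcomp_prod {ι : Type*} (s : Finset ι) (f : ι → PowerSeries F) (g : PowerSeries F)
    (hg : constantCoeff g = 0) :
    pcomp (∏ i ∈ s, f i) g = ∏ i ∈ s, pcomp (f i) g := by
  induction s using Finset.cons_induction with
  | empty => simpa using pcomp_one g
  | cons a t ha ih => rw [prod_cons, prod_cons, pcomp_mul _ _ _ hg, ih]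

lemma pcomp_sub (f₁ f₂ g : PowerSeries F) (hg : constantCoeff g = 0) :
    pcomp (f₁ - f₂) g = pcomp f₁ g - pcomp f₂ g := by
  ext k
  rw [map_sub, pcomp_coeff' _ _ hg k.lt_succ_self, pcomp_coeff' _ _ hg k.lt_succ_self,
    pcomp_coeff' _ _ hg k.lt_succ_self, ← Finset.sum_sub_distrib]
  exact sum_congr rfl fun n _ => by rw [map_sub, sub_mul]

lemma constantCoeff_pcomp (f g : PowerSeries F) (hf : constantCoeff f = 0)
    (hg : constantCoeff g = 0) : constantCoeff (pcomp f g) = 0 := by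
  rw [← coeff_zero_eq_constantCoeff_apply, pcomp_coeff' f g hg Nat.zero_lt_one,
    Finset.sum_range_one, coeff_zero_eq_constantCoeff_apply, hf, zero_mul]

lemma pcomp_assoc (f g h : PowerSeries F) (hg : constantCoeff g = 0)
    (hh : constantCoeff h = 0) :
    pcomp (pcomp f g) h = pcomp f (pcomp g h) := by
  have hgh : constantCoeff (pcomp g h) = 0 := constantCoeff_pcomp g h hg hh
  ext k
  rw [pcomp_coeff' _ _ hh k.lt_succ_self, pcomp_coeff' _ _ hgh k.lt_succ_self]
  have L : ∀ m ∈ range (k+1), coeff m (pcomp f g) * coeff k (h ^ m)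
      = ∑ n ∈ range (k+1), coeff n f * coeff m (g ^ n) * coeff k (h ^ m) := by
    intro m hm
    rw [pcomp_coeff' f g hg (mem_range.mp hm), Finset.sum_mul]
  have Rr : ∀ n ∈ range (k+1), coeff n f * coeff k ((pcomp g h) ^ n)
      = ∑ m ∈ range (k+1), coeff n f * (coeff m (g ^ n) * coeff k (h ^ m)) := by
    intro n _
    rw [← pcomp_pow g h hh n, pcomp_coeff' _ _ hh k.lt_succ_self, Finset.mul_sum]
  rw [sum_congr rfl L, sum_congr rfl Rr, Finset.sum_comm]
  exact sum_congr rfl fun n _ => sum_congr rfl fun m _ => by ring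

lemma exists_X_pow_mul {f : PowerSeries F} {d : ℕ} (h : ∀ m, m < d → coeff m f = 0) :
    ∃ S, f = X ^ d * S ∧ constantCoeff S = coeff d f := by
  obtain ⟨S, hS⟩ := PowerSeries.X_pow_dvd_iff.mpr h
  refine ⟨S, hS, ?_⟩
  have h0 := coeff_X_pow_mul S d 0
  rw [zero_add] at h0
  rw [hS, h0, coeff_zero_eq_constantCoeff_apply]

lemma coeff_X_pow_mul_eq_zero {S : PowerSeries F} {d m : ℕ} (h : m < d) :
    coeff m (X ^ d * S) = 0 :=
  PowerSeries.X_pow_dvd_iff.mp (dvd_mul_right _ _) m h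

lemma pow_struct {R : PowerSeries F} {d : ℕ} (h : ∀ m, m < d → coeff m R = 0) (n : ℕ) :
    coeff (n * d) (R ^ n) = (coeff d R) ^ n ∧
      ∀ j, j < n * d → coeff j (R ^ n) = 0 := by
  obtain ⟨S, hS, hc⟩ := exists_X_pow_mul h
  have hpow : R ^ n = X ^ (n * d) * S ^ n := by
    rw [hS, mul_pow, ← pow_mul, mul_comm d n]
  constructor
  · have h0 := coeff_X_pow_mul (S ^ n) (n * d) 0
    rw [zero_add] at h0
    rw [hpow, h0, coeff_zero_eq_constantCoeff_apply, map_pow, hc]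
  · intro j hj
    rw [hpow]
    exact coeff_X_pow_mul_eq_zero hj

lemma coeff_pow_self {g : PowerSeries F} (hg : constantCoeff g = 0) (n : ℕ) :
    coeff n (g ^ n) = (coeff 1 g) ^ n := by
  have h : ∀ m, m < 1 → coeff m g = 0 := by
    intro m hm
    interval_cases m
    rw [coeff_zero_eq_constantCoeff_apply, hg]
  have := (pow_struct h n).1
  rwa [mul_one] at this

lemma prod_X_pow {ι : Type*} (s : Finset ι) (f : ι → PowerSeries F)
    (h : ∀ i ∈ s, constantCoeff (f i) = 0) :
    ∃ S, (∏ i ∈ s, f i) = X ^ s.card * S ∧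
      constantCoeff S = ∏ i ∈ s, coeff 1 (f i) := by
  induction s using Finset.cons_induction with
  | empty => exact ⟨1, by simp, by simp⟩
  | cons a t ha ih =>
    obtain ⟨S, h1, h2⟩ := ih fun i hi => h i (Finset.mem_cons_of_mem hi)
    obtain ⟨Sa, ha1, ha2⟩ := exists_X_pow_mul (d := 1) (f := f a) (fun m hm => by
      interval_cases m
      rw [coeff_zero_eq_constantCoeff_apply]
      exact h a (Finset.mem_cons_self a t))
    refine ⟨Sa * S, ?_, ?_⟩
    · rw [Finset.prod_cons, h1, ha1, Finset.card_cons, pow_one]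
      ring
    · rw [map_mul, h2, ha2, Finset.prod_cons]

lemma prod_struct {ι : Type*} (s : Finset ι) (f : ι → PowerSeries F)
    (h : ∀ i ∈ s, constantCoeff (f i) = 0) :
    (∀ m, m < s.card → coeff m (∏ i ∈ s, f i) = 0) ∧
      coeff s.card (∏ i ∈ s, f i) = ∏ i ∈ s, coeff 1 (f i) := by
  obtain ⟨S, h1, h2⟩ := prod_X_pow s f h
  constructor
  · intro m hm
    rw [h1]
    exact coeff_X_pow_mul_eq_zero hm
  · have h0 := coeff_X_pow_mul S s.card 0
    rw [zero_add] at h0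
    rw [h1, h0, coeff_zero_eq_constantCoeff_apply, h2]

lemma pcomp_inj {R : PowerSeries F} {d : ℕ} (hd : 0 < d)
    (hlow : ∀ m, m < d → coeff m R = 0) (hne : coeff d R ≠ 0)
    {f : PowerSeries F} (hf : pcomp f R = 0) : f = 0 := by
  by_contra hf0
  have hcc : constantCoeff R = 0 := by
    rw [← coeff_zero_eq_constantCoeff_apply]
    exact hlow 0 hd
  have hex : ∃ n, coeff n f ≠ 0 := by
    by_contra hc
    push_neg at hc
    exact hf0 (PowerSeries.ext fun n => by rw [hc, map_zero])
  classical
  set n := Nat.find hex with hn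
  have hns : coeff n f ≠ 0 := Nat.find_spec hex
  have hnnd : n ≤ n * d := Nat.le_mul_of_pos_right n hd
  have key : coeff (n * d) (pcomp f R) = coeff n f * (coeff d R) ^ n := by
    rw [pcomp_coeff' f R hcc (Nat.lt_succ_self (n * d)), Finset.sum_eq_single n]
    · rw [(pow_struct hlow n).1]
    · intro m _ hmn
      rcases lt_or_gt_of_ne hmn with h | h
      · rw [not_not.mp (Nat.find_min hex h), zero_mul]
      · rw [(pow_struct hlow m).2 (n * d) ((Nat.mul_lt_mul_right hd).mpr h), mul_zero]
    · intro hni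
      exact absurd (Finset.mem_range.mpr (Nat.lt_succ_of_le hnnd)) hni
  rw [hf, map_zero] at key
  exact mul_ne_zero hns (pow_ne_zero n hne) key.symm

lemma pcomp_injective {R : PowerSeries F} {d : ℕ} (hd : 0 < d)
    (hlow : ∀ m, m < d → coeff m R = 0) (hne : coeff d R ≠ 0)
    {f₁ f₂ : PowerSeries F} (h : pcomp f₁ R = pcomp f₂ R) : f₁ = f₂ := by
  have hcc : constantCoeff R = 0 := by
    rw [← coeff_zero_eq_constantCoeff_apply]
    exact hlow 0 hd
  have := pcomp_inj hd hlow hne (f := f₁ - f₂) (by rw [pcomp_sub _ _ _ hcc, h, sub_self])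
  exact sub_eq_zero.mp this

end PcompAux


open PcompAux

theorem stmt_5 {p : ℕ} [Fact p.Prime] {K : Type*} [NormedField K] [CompleteSpace K]
    [IsUltrametricDist K] [Algebra ℚ_[p] K] [FiniteDimensional ℚ_[p] K]
    (hK : ∀ x : ℚ_[p], ‖algebraMap ℚ_[p] K x‖ = ‖x‖)
    (q : ℕ) (hq : HasResidueCard K q)
    -- the family `([a])_{a ∈ O_K}` of power series in `T·O_K[[T]]`
    (ρ : K → PowerSeries K)
    (hρ0 : ∀ a : K, ‖a‖ ≤ 1 → PowerSeries.constantCoeff (ρ a) = 0)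
    (hρint : ∀ a : K, ‖a‖ ≤ 1 → ∀ n, ‖PowerSeries.coeff n (ρ a)‖ ≤ 1)
    (hρ1 : ∀ a : K, ‖a‖ ≤ 1 → PowerSeries.coeff 1 (ρ a) = a)
    (hρmul : ∀ a b : K, ‖a‖ ≤ 1 → ‖b‖ ≤ 1 → pcomp (ρ a) (ρ b) = ρ (a * b))
    -- `α ∈ m_K \ {0}` with `[α] ≡ T^q mod m_K`
    (α : K) (hαne : α ≠ 0) (hαlt : ‖α‖ < 1)
    (hαq : ∀ n, ‖PowerSeries.coeff n (ρ α - PowerSeries.X ^ q)‖ < 1)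
    -- `W` is a finite subgroup of `O_K^×` of order `d`
    (W : Subgroup Kˣ) [Fintype W] (d : ℕ) (hd : Nat.card W = d)
    (hWnorm : ∀ w : Kˣ, w ∈ W → ‖(w : K)‖ = 1)
    -- `R(T) = ∏_{w ∈ W} [w](T)`
    (R : PowerSeries K) (hR : R = ∏ w : W, ρ ((w : Kˣ) : K))
    -- for `a ∈ O_K`, `Γ_a ∈ O_K[[T]]` is the (unique) power series with `Γ_a ∘ R = R ∘ [a]`
    (Γ : K → PowerSeries K)
    (hΓint : ∀ a : K, ‖a‖ ≤ 1 → ∀ n, ‖PowerSeries.coeff n (Γ a)‖ ≤ 1)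
    (hΓ : ∀ a : K, ‖a‖ ≤ 1 → pcomp (Γ a) R = pcomp R (ρ a)) :
    ∀ k ℓ : K, ‖k‖ = 1 → ‖ℓ‖ = 1 →
      ((Γ k = Γ ℓ ↔ k ^ d = ℓ ^ d) ∧
       (Γ k = Γ ℓ ↔ PowerSeries.coeff 1 (Γ k) = PowerSeries.coeff 1 (Γ ℓ))) := by
  intro k ℓ hk hℓ
  classical
  have hdpos : 0 < d := by
    rw [← hd]
    exact Nat.card_pos
  have hcard : (Finset.univ : Finset W).card = d := by
    rw [Finset.card_univ, ← Nat.card_eq_fintype_card, hd]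
  have hWle : ∀ w : W, ‖((w : Kˣ) : K)‖ ≤ 1 := fun w => le_of_eq (hWnorm w w.2)
  have hcc0 : ∀ w : W, PowerSeries.constantCoeff (ρ ((w : Kˣ) : K)) = 0 :=
    fun w => hρ0 _ (hWle w)
  have hRlow : ∀ m, m < d → PowerSeries.coeff m R = 0 := by
    intro m hm
    rw [hR]
    exact (prod_struct Finset.univ _ (fun w _ => hcc0 w)).1 m (by rwa [hcard])
  have hRd : PowerSeries.coeff d R = ∏ w : W, ((w : Kˣ) : K) := by
    rw [hR, ← hcard, (prod_struct Finset.univ _ (fun w _ => hcc0 w)).2]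
    exact Finset.prod_congr rfl fun w _ => hρ1 _ (hWle w)
  have hRdne : PowerSeries.coeff d R ≠ 0 := by
    rw [hRd]
    exact Finset.prod_ne_zero_iff.mpr fun w _ => Units.ne_zero (w : Kˣ)
  have hRcc : PowerSeries.constantCoeff R = 0 := by
    rw [← PowerSeries.coeff_zero_eq_constantCoeff_apply]
    exact hRlow 0 hdpos
  -- `coeff 1 (Γ a) = a ^ d`
  have hΓ1 : ∀ a : K, ‖a‖ ≤ 1 → PowerSeries.coeff 1 (Γ a) = a ^ d := by
    intro a ha
    have hcc : PowerSeries.constantCoeff (ρ a) = 0 := hρ0 a ha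
    have h1 : PowerSeries.coeff d (pcomp (Γ a) R)
        = PowerSeries.coeff 1 (Γ a) * PowerSeries.coeff d R := by
      rw [pcomp_coeff' _ _ hRcc (Nat.lt_succ_self d), Finset.sum_eq_single 1]
      · rw [pow_one]
      · intro m hm hm1
        rcases Nat.lt_or_ge m 1 with h | h
        · interval_cases m
          rw [pow_zero, PowerSeries.coeff_one, if_neg hdpos.ne', mul_zero]
        · have hdm : d < m * d := by
            calc d = 1 * d := (one_mul d).symm
            _ < m * d := (Nat.mul_lt_mul_right hdpos).mpr (by omega)
          rw [(pow_struct hRlow m).2 d hdm, mul_zero]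
      · intro h1
        exact absurd (Finset.mem_range.mpr (by omega)) h1
    have h2 : PowerSeries.coeff d (pcomp R (ρ a))
        = PowerSeries.coeff d R * a ^ d := by
      rw [pcomp_coeff' _ _ hcc (Nat.lt_succ_self d), Finset.sum_eq_single d]
      · rw [coeff_pow_self hcc d, hρ1 a ha]
      · intro m hm hmd
        rcases lt_or_gt_of_ne hmd with h | h
        · rw [hRlow m h, zero_mul]
        · rw [coeff_pow_eq_zero hcc h, mul_zero]
      · intro hni
        exact absurd (Finset.mem_range.mpr (Nat.lt_succ_self d)) hni
    have h3 : PowerSeries.coeff 1 (Γ a) * PowerSeries.coeff d R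
        = a ^ d * PowerSeries.coeff d R := by
      rw [← h1, hΓ a ha, h2, mul_comm]
    exact mul_right_cancel₀ hRdne h3
  -- `k ^ d = ℓ ^ d → Γ k = Γ ℓ`
  have hdir : ∀ k ℓ : K, ‖k‖ = 1 → ‖ℓ‖ = 1 → k ^ d = ℓ ^ d → Γ k = Γ ℓ := by
    intro k ℓ hk hℓ hpow
    have hℓne : ℓ ≠ 0 := by
      intro h
      rw [h, norm_zero] at hℓ
      exact one_ne_zero hℓ.symm
    have hw : (k * ℓ⁻¹) ^ d = 1 := by
      rw [mul_pow, inv_pow, hpow, mul_inv_cancel₀ (pow_ne_zero d hℓne)]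
    -- find `u ∈ W` whose image in `K` is `k * ℓ⁻¹`
    obtain ⟨u, hu, huw⟩ : ∃ u : Kˣ, u ∈ W ∧ ((u : Kˣ) : K) = k * ℓ⁻¹ := by
      by_contra hnot
      push_neg at hnot
      set P : Polynomial K := Polynomial.X ^ d - Polynomial.C 1 with hP
      have hPne : P ≠ 0 := Polynomial.X_pow_sub_C_ne_zero hdpos 1
      have hdeg : P.natDegree = d := Polynomial.natDegree_X_pow_sub_C
      have hroot : ∀ x : K, x ^ d = 1 → x ∈ P.roots.toFinset := by
        intro x hx
        rw [Multiset.mem_toFinset, Polynomial.mem_roots hPne]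
        simp [hP, hx]
      set T : Finset K := Finset.image (fun u : W => ((u : Kˣ) : K)) Finset.univ with hT
      have hTcard : T.card = d := by
        rw [hT, Finset.card_image_of_injective _
          (fun a b hab => Subtype.ext (Units.ext hab)), hcard]
      have hwT : (k * ℓ⁻¹) ∉ T := by
        intro hmem
        rw [hT, Finset.mem_image] at hmem
        obtain ⟨u, _, hu⟩ := hmem
        exact hnot (u : Kˣ) u.2 hu
      have hsub : insert (k * ℓ⁻¹) T ⊆ P.roots.toFinset := by
        intro x hx
        rcases Finset.mem_insert.mp hx with h | h
        · exact h ▸ hroot _ hw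
        · rw [hT, Finset.mem_image] at h
          obtain ⟨u, _, hu⟩ := h
          refine hu ▸ hroot _ ?_
          have h1 : (u : W) ^ d = 1 := by
            rw [← hd]
            exact pow_card_eq_one'
          have h2 := congrArg (fun v : W => (((v : Kˣ) : K))) h1
          simpa using h2
      have hle : d + 1 ≤ d := by
        calc d + 1 = (insert (k * ℓ⁻¹) T).card := by
              rw [Finset.card_insert_of_notMem hwT, hTcard]
          _ ≤ P.roots.toFinset.card := Finset.card_le_card hsub
          _ ≤ Multiset.card P.roots := P.roots.toFinset_card_le
          _ ≤ P.natDegree := P.card_roots'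
          _ = d := hdeg
      omega
    have hu1 : ‖((u : Kˣ) : K)‖ ≤ 1 := le_of_eq (hWnorm u hu)
    have hkeq : k = ((u : Kˣ) : K) * ℓ := by
      rw [huw]
      field_simp
    -- `R ∘ [u] = R`
    have hRu : pcomp R (ρ ((u : Kˣ) : K)) = R := by
      rw [hR, pcomp_prod _ _ _ (hρ0 _ hu1)]
      have step : ∀ w : W, pcomp (ρ ((w : Kˣ) : K)) (ρ ((u : Kˣ) : K))
          = ρ (((w * ⟨u, hu⟩ : W) : Kˣ) : K) := by
        intro w
        rw [hρmul _ _ (hWle w) hu1]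
        norm_num
      rw [Finset.prod_congr rfl fun w _ => step w]
      exact Fintype.prod_equiv (Equiv.mulRight (⟨u, hu⟩ : W)) _ _ (fun w => rfl)
    have hcompk : pcomp R (ρ k) = pcomp R (ρ ℓ) := by
      rw [hkeq, ← hρmul _ _ hu1 (le_of_eq hℓ),
        ← pcomp_assoc R (ρ ((u : Kˣ) : K)) (ρ ℓ) (hρ0 _ hu1) (hρ0 _ (le_of_eq hℓ)), hRu]
    have h2 : pcomp (Γ k) R = pcomp (Γ ℓ) R := by
      rw [hΓ k (le_of_eq hk), hΓ ℓ (le_of_eq hℓ), hcompk]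
    exact pcomp_injective hdpos hRlow hRdne h2
  constructor
  · constructor
    · intro h
      rw [← hΓ1 k (le_of_eq hk), ← hΓ1 ℓ (le_of_eq hℓ), h]
    · exact hdir k ℓ hk hℓ
  · constructor
    · intro h
      rw [h]
    · intro h
      exact hdir k ℓ hk hℓ (by rw [← hΓ1 k (le_of_eq hk), ← hΓ1 ℓ (le_of_eq hℓ), h])
end

section
/- Let K be a finite extension of ℚ_p with ring of integers O_K, maximal ideal m_K, and residue field of cardinality q. Let ([a])_{a∈O_K} be a family of power series [a] ∈ T·O_K[[T]] with [a]'(0) = a and [a] ∘ [b] = [ab] for all a, b ∈ O_K, and suppose that for some α ∈ m_K \ {0} one has [α] ≡ T^q mod m_K. Let W be a finite subgroup of O_K^× of order d, let R(T) := ∏_{w∈W} [w](T), and let Γ_α ∈ O_K[[T]] be the unique power series with Γ_α ∘ R = R ∘ [α]. Then Γ_α(0) = 0, Γ_α'(0) = α^d, and Γ_α ≡ T^q mod m_K (i.e. every coefficient of Γ_α(T) − T^q lies in m_K). -/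
set_option maxHeartbeats 1000000

open PowerSeries

noncomputable section Stmt6Aux

variable (K : Type*) [NormedField K] [IsUltrametricDist K]

/-- the ring of integers of `K` -/
def intRing : Subring K where
  carrier := {x | ‖x‖ ≤ 1}
  one_mem' := by simp
  mul_mem' := fun {a b} ha hb => by
    have ha' : ‖a‖ ≤ 1 := ha
    have hb' : ‖b‖ ≤ 1 := hb
    show ‖a * b‖ ≤ 1
    calc ‖a * b‖ ≤ ‖a‖ * ‖b‖ := norm_mul_le a b
    _ ≤ 1 := by nlinarith [norm_nonneg a, norm_nonneg b]
  add_mem' := fun {a b} ha hb =>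
    (IsUltrametricDist.norm_add_le_max a b).trans (max_le ha hb)
  zero_mem' := by simp
  neg_mem' := fun {a} ha => by simpa using ha

/-- the maximal ideal of the ring of integers -/
def intIdeal : Ideal (intRing K) where
  carrier := {x | ‖(x : K)‖ < 1}
  add_mem' := fun {a b} ha hb =>
    lt_of_le_of_lt (IsUltrametricDist.norm_add_le_max (a : K) (b : K)) (max_lt ha hb)
  zero_mem' := by simp
  smul_mem' := fun c x hx => by
    have hc : ‖(c : K)‖ ≤ 1 := c.2
    have : ‖(c : K) * (x : K)‖ ≤ ‖(x : K)‖ := by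
      rw [norm_mul]
      exact mul_le_of_le_one_left (norm_nonneg _) hc
    exact lt_of_le_of_lt this hx

instance : (intIdeal K).IsMaximal := by
  rw [Ideal.isMaximal_iff]
  constructor
  · show ¬ (‖((1 : intRing K) : K)‖ < 1)
    simp
  · intro J x _ hxI hxJ
    have hx1 : ‖(x : K)‖ = 1 := le_antisymm x.2 (not_lt.mp hxI)
    have hxne : (x : K) ≠ 0 := by
      intro h; rw [h, norm_zero] at hx1; norm_num at hx1
    have hyO : ‖(x : K)⁻¹‖ ≤ 1 := by rw [norm_inv, hx1]; norm_num
    have : (1 : intRing K) = ⟨(x : K)⁻¹, hyO⟩ * x := by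
      ext; simp [inv_mul_cancel₀ hxne]
    rw [this]
    exact J.mul_mem_left _ hxJ

/-- the residue field -/
def resField := intRing K ⧸ intIdeal K

instance : Field (resField K) := Ideal.Quotient.field _

/-- the residue map -/
def resmk : intRing K →+* resField K := Ideal.Quotient.mk _

end Stmt6Aux

section PSLemmas

lemma coeff_pow_eq_zero' {R : Type*} [CommRing R] {g : PowerSeries R}
    (hg : constantCoeff g = 0) {n k : ℕ} (h : k < n) : PowerSeries.coeff k (g ^ n) = 0 := by
  have hdvd : (X : PowerSeries R) ^ n ∣ g ^ n :=
    pow_dvd_pow_of_dvd (PowerSeries.X_dvd_iff.mpr hg) n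
  exact PowerSeries.X_pow_dvd_iff.mp hdvd k h

lemma pcomp_coeff {F : Type*} [NormedField F] (f g : PowerSeries F)
    (hg : constantCoeff g = 0) (k : ℕ) :
    PowerSeries.coeff k (pcomp f g) =
      ∑ n ∈ Finset.range (k + 1), PowerSeries.coeff n f * PowerSeries.coeff k (g ^ n) := by
  rw [pcomp, coeff_mk]
  refine tsum_eq_sum fun n hn => ?_
  have : k < n := by
    by_contra h
    exact hn (Finset.mem_range.mpr (by omega))
  rw [coeff_pow_eq_zero' hg this, mul_zero]

/-- leading coefficient of a product of series of order 1 -/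
lemma coeff_card_prod {R : Type*} [CommRing R] {ι : Type*} (s : Finset ι)
    (f : ι → PowerSeries R) (hf : ∀ i ∈ s, constantCoeff (f i) = 0) :
    PowerSeries.coeff s.card (∏ i ∈ s, f i) = ∏ i ∈ s, PowerSeries.coeff 1 (f i) := by
  classical
  induction s using Finset.induction_on with
  | empty => simp
  | insert a s' hni ih =>
    rw [Finset.prod_insert hni, Finset.prod_insert hni, Finset.card_insert_of_notMem hni]
    have h0 : constantCoeff (f a) = 0 := hf a (Finset.mem_insert_self a s')
    have hrest : ∀ i ∈ s', constantCoeff (f i) = 0 :=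
      fun i hi => hf i (Finset.mem_insert_of_mem hi)
    have hdvd : (X : PowerSeries R) ^ s'.card ∣ ∏ i ∈ s', f i := by
      calc (X : PowerSeries R) ^ s'.card = ∏ _i ∈ s', (X : PowerSeries R) := by
            rw [Finset.prod_const]
        _ ∣ ∏ i ∈ s', f i :=
            Finset.prod_dvd_prod_of_dvd _ _ fun i hi => PowerSeries.X_dvd_iff.mpr (hrest i hi)
    rw [PowerSeries.coeff_mul]
    rw [Finset.sum_eq_single (1, s'.card)]
    · rw [ih hrest]
    · rintro ⟨i, j⟩ hmem hne
      rw [Finset.HasAntidiagonal.mem_antidiagonal] at hmem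
      rcases Nat.lt_or_ge j s'.card with hj | hj
      · rw [PowerSeries.X_pow_dvd_iff.mp hdvd j hj, mul_zero]
      · rcases Nat.eq_zero_or_pos i with hi | hi
        · subst hi
          rw [PowerSeries.coeff_zero_eq_constantCoeff, h0, zero_mul]
        · have : i = 1 ∧ j = s'.card := by omega
          exact absurd (Prod.ext this.1 this.2) hne
    · intro h
      exact absurd (Finset.HasAntidiagonal.mem_antidiagonal.mpr (by omega)) h

end PSLemmas

section LiftSec
variable {K : Type*} [NormedField K] [IsUltrametricDist K]

/-- lift an integral power series to the ring of integers -/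
noncomputable def liftPS (f : PowerSeries K) (hf : ∀ n, ‖PowerSeries.coeff n f‖ ≤ 1) :
    PowerSeries (intRing K) :=
  PowerSeries.mk fun n => ⟨PowerSeries.coeff n f, hf n⟩

@[simp] lemma coeff_liftPS (f : PowerSeries K) (hf) (n : ℕ) :
    ((PowerSeries.coeff n (liftPS f hf) : intRing K) : K)
      = PowerSeries.coeff n f := by
  simp [liftPS]

lemma map_liftPS (f : PowerSeries K) (hf) :
    PowerSeries.map (intRing K).subtype (liftPS f hf) = f := by
  ext n
  simp [PowerSeries.coeff_map, liftPS]

end LiftSec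

theorem stmt_6 {p : ℕ} [Fact p.Prime] {K : Type*} [NormedField K] [CompleteSpace K]
    [IsUltrametricDist K] [Algebra ℚ_[p] K] [FiniteDimensional ℚ_[p] K]
    (hK : ∀ x : ℚ_[p], ‖algebraMap ℚ_[p] K x‖ = ‖x‖)
    (q : ℕ) (hq : HasResidueCard K q)
    -- the family `([a])_{a ∈ O_K}` of power series in `T·O_K[[T]]`
    (ρ : K → PowerSeries K)
    (hρ0 : ∀ a : K, ‖a‖ ≤ 1 → PowerSeries.constantCoeff (ρ a) = 0)
    (hρint : ∀ a : K, ‖a‖ ≤ 1 → ∀ n, ‖PowerSeries.coeff n (ρ a)‖ ≤ 1)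
    (hρ1 : ∀ a : K, ‖a‖ ≤ 1 → PowerSeries.coeff 1 (ρ a) = a)
    (hρmul : ∀ a b : K, ‖a‖ ≤ 1 → ‖b‖ ≤ 1 → pcomp (ρ a) (ρ b) = ρ (a * b))
    -- `α ∈ m_K \ {0}` with `[α] ≡ T^q mod m_K`
    (α : K) (hαne : α ≠ 0) (hαlt : ‖α‖ < 1)
    (hαq : ∀ n, ‖PowerSeries.coeff n (ρ α - PowerSeries.X ^ q)‖ < 1)
    -- `W` is a finite subgroup of `O_K^×` of order `d`
    (W : Subgroup Kˣ) [Fintype W] (d : ℕ) (hd : Nat.card W = d)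
    (hWnorm : ∀ w : Kˣ, w ∈ W → ‖(w : K)‖ = 1)
    -- `R(T) = ∏_{w ∈ W} [w](T)`
    (R : PowerSeries K) (hR : R = ∏ w : W, ρ ((w : Kˣ) : K))
    -- for `a ∈ O_K`, `Γ_a ∈ O_K[[T]]` is the (unique) power series with `Γ_a ∘ R = R ∘ [a]`
    (Γ : K → PowerSeries K)
    (hΓint : ∀ a : K, ‖a‖ ≤ 1 → ∀ n, ‖PowerSeries.coeff n (Γ a)‖ ≤ 1)
    (hΓ : ∀ a : K, ‖a‖ ≤ 1 → pcomp (Γ a) R = pcomp R (ρ a)) :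
    PowerSeries.constantCoeff (Γ α) = 0 ∧
    PowerSeries.coeff 1 (Γ α) = α ^ d ∧
    (∀ n, ‖PowerSeries.coeff n (Γ α - PowerSeries.X ^ q)‖ < 1) := by
  classical
  have hα1 : ‖α‖ ≤ 1 := hαlt.le
  have hd1 : 1 ≤ d := by
    rw [← hd, Nat.card_eq_fintype_card]
    exact Fintype.card_pos
  have hwnorm : ∀ w : W, ‖((w : Kˣ) : K)‖ = 1 := fun w => hWnorm w w.2
  have hwle : ∀ w : W, ‖((w : Kˣ) : K)‖ ≤ 1 := fun w => (hwnorm w).le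
  have hconstρ : PowerSeries.constantCoeff (ρ α) = 0 := hρ0 α hα1
  have hconstR : PowerSeries.constantCoeff R = 0 := by
    rw [hR, map_prod]
    exact Finset.prod_eq_zero (Finset.mem_univ (1 : W)) (hρ0 _ (hwle 1))
  have hEK : ∀ n, ∑ m ∈ Finset.range (n+1),
        PowerSeries.coeff m (Γ α) * PowerSeries.coeff n (R ^ m)
      = ∑ m ∈ Finset.range (n+1),
        PowerSeries.coeff m R * PowerSeries.coeff n ((ρ α) ^ m) := by
    intro n
    have h := congrArg (PowerSeries.coeff n) (hΓ α hα1)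
    rwa [pcomp_coeff _ _ hconstR, pcomp_coeff _ _ hconstρ] at h
  -- Part 1
  have h1 : PowerSeries.constantCoeff (Γ α) = 0 := by
    have h := hEK 0
    simp only [zero_add, Finset.sum_range_one, pow_zero, map_one, mul_one,
      PowerSeries.coeff_zero_eq_constantCoeff] at h
    rw [h]
    exact hconstR
  -- order of R
  have hXdR : (X : PowerSeries K) ^ d ∣ R := by
    rw [hR]
    have hXd : (X : PowerSeries K) ^ d = ∏ _w : W, (X : PowerSeries K) := by
      rw [Finset.prod_const, Finset.card_univ, ← Nat.card_eq_fintype_card, hd]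
    rw [hXd]
    exact Finset.prod_dvd_prod_of_dvd _ _
      fun w _ => PowerSeries.X_dvd_iff.mpr (hρ0 _ (hwle w))
  have hRlow : ∀ n < d, PowerSeries.coeff n R = 0 :=
    fun n hn => PowerSeries.X_pow_dvd_iff.mp hXdR n hn
  have hRpowlow : ∀ m n : ℕ, n < m * d → PowerSeries.coeff n (R ^ m) = 0 := by
    intro m n h
    have hdvd : (X : PowerSeries K) ^ (m * d) ∣ R ^ m := by
      rw [mul_comm, pow_mul]
      exact pow_dvd_pow_of_dvd hXdR m
    exact PowerSeries.X_pow_dvd_iff.mp hdvd n h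
  have hRd : PowerSeries.coeff d R = ∏ w : W, ((w : Kˣ) : K) := by
    rw [hR]
    have hcard : (Finset.univ : Finset W).card = d := by
      rw [Finset.card_univ, ← Nat.card_eq_fintype_card, hd]
    have h := coeff_card_prod (Finset.univ : Finset W)
      (fun w => ρ ((w : Kˣ) : K)) (fun w _ => hρ0 _ (hwle w))
    rw [hcard] at h
    rw [h]
    exact Finset.prod_congr rfl fun w _ => hρ1 _ (hwle w)
  have hRdnorm : ‖PowerSeries.coeff d R‖ = 1 := by
    rw [hRd, norm_prod]
    exact Finset.prod_eq_one fun w _ => hwnorm w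
  have hRdne : PowerSeries.coeff d R ≠ 0 := by
    intro h; rw [h, norm_zero] at hRdnorm; norm_num at hRdnorm
  -- decomposition ρ α = X * u
  obtain ⟨u, hu⟩ := PowerSeries.X_dvd_iff.mpr hconstρ
  have hu0 : PowerSeries.constantCoeff u = α := by
    have h := hρ1 α hα1
    rw [hu] at h
    rw [← PowerSeries.coeff_zero_eq_constantCoeff_apply, ← h]
    have := PowerSeries.coeff_X_pow_mul u 1 0
    simpa using this.symm
  have hραd : PowerSeries.coeff d ((ρ α) ^ d) = α ^ d := by
    rw [hu, mul_pow]
    have h := PowerSeries.coeff_X_pow_mul (u ^ d) d 0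
    rw [zero_add] at h
    rw [h, PowerSeries.coeff_zero_eq_constantCoeff, map_pow, hu0]
  -- Part 2
  have h2 : PowerSeries.coeff 1 (Γ α) = α ^ d := by
    have hE := hEK d
    have hL : ∑ m ∈ Finset.range (d+1),
        PowerSeries.coeff m (Γ α) * PowerSeries.coeff d (R ^ m)
        = PowerSeries.coeff 1 (Γ α) * PowerSeries.coeff d R := by
      rw [Finset.sum_eq_single 1]
      · rw [pow_one]
      · intro m hm hne
        rcases Nat.eq_zero_or_pos m with h0 | h0
        · subst h0
          rw [pow_zero, PowerSeries.coeff_one, if_neg (by omega), mul_zero]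
        · have h2m : 2 ≤ m := by omega
          have hmd : 2 * d ≤ m * d := Nat.mul_le_mul_right d h2m
          rw [hRpowlow m d (by omega), mul_zero]
      · intro h
        exact absurd (Finset.mem_range.mpr (by omega)) h
    have hRHS : ∑ m ∈ Finset.range (d+1),
        PowerSeries.coeff m R * PowerSeries.coeff d ((ρ α) ^ m)
        = PowerSeries.coeff d R * α ^ d := by
      rw [Finset.sum_eq_single d]
      · rw [hραd]
      · intro m hm hne
        rw [hRlow m (by simp at hm; omega), zero_mul]
      · intro h
        exact absurd (Finset.mem_range.mpr (by omega)) h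
    rw [hL, hRHS] at hE
    rw [mul_comm] at hE
    exact mul_left_cancel₀ hRdne hE
  refine ⟨h1, h2, ?_⟩
  -- ### Part 3: reduction to the residue field
  obtain ⟨S, hScard, hS1, hSsep, hScov⟩ := hq
  set π : intRing K →+* resField K := Ideal.Quotient.mk (intIdeal K) with hπdef
  -- the residue field is finite of cardinality q
  let f : {x // x ∈ S} → resField K := fun x => π ⟨x.1, hS1 x.1 x.2⟩
  have hfinj : Function.Injective f := by
    intro a b hab
    have hmem : (⟨a.1, hS1 a.1 a.2⟩ - ⟨b.1, hS1 b.1 b.2⟩ : intRing K) ∈ intIdeal K :=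
      Ideal.Quotient.eq.mp hab
    have hlt : ‖(a : K) - (b : K)‖ < 1 := hmem
    by_contra hne
    have hab' : (a : K) ≠ (b : K) := fun h => hne (Subtype.ext h)
    exact absurd (hSsep a a.2 b b.2 hab') (not_le.mpr hlt)
  have hfsurj : Function.Surjective f := by
    intro z
    obtain ⟨w, rfl⟩ := Ideal.Quotient.mk_surjective z
    obtain ⟨x, hxS, hxlt⟩ := hScov (w : K) w.2
    refine ⟨⟨x, hxS⟩, ?_⟩
    show π _ = π w
    refine (Ideal.Quotient.eq).mpr ?_
    show ‖((⟨x, hS1 x hxS⟩ - w : intRing K) : K)‖ < 1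
    have : ((⟨x, hS1 x hxS⟩ - w : intRing K) : K) = x - (w : K) := by push_cast; ring
    rw [this, norm_sub_rev]
    exact hxlt
  haveI : Fintype (resField K) := Fintype.ofSurjective f hfsurj
  have hcard : Fintype.card (resField K) = q := by
    rw [← hScard, ← Fintype.card_coe S]
    exact (Fintype.card_of_bijective ⟨hfinj, hfsurj⟩).symm
  have hqpos : 0 < q := hcard ▸ Fintype.card_pos
  -- integral lifts
  set ΓO := liftPS (Γ α) (hΓint α hα1) with hΓOdef
  set ρO := liftPS (ρ α) (hρint α hα1) with hρOdef
  set RO := ∏ w : W, liftPS (ρ ((w : Kˣ) : K)) (hρint _ (hwle w)) with hROdef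
  set φ : PowerSeries (intRing K) →+* PowerSeries K :=
    PowerSeries.map (intRing K).subtype with hφdef
  have hφRO : φ RO = R := by
    rw [hROdef, map_prod, hR]
    exact Finset.prod_congr rfl fun w _ => map_liftPS _ _
  have hcoeRO : ∀ m n : ℕ,
      ((PowerSeries.coeff n (RO ^ m) : intRing K) : K) = PowerSeries.coeff n (R ^ m) := by
    intro m n
    have h : PowerSeries.coeff n (φ (RO ^ m)) = PowerSeries.coeff n (R ^ m) := by
      rw [map_pow, hφRO]
    rw [← h, hφdef, PowerSeries.coeff_map]
    rfl
  have hcoeROc : ∀ n : ℕ,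
      ((PowerSeries.coeff n RO : intRing K) : K) = PowerSeries.coeff n R := by
    intro n
    have := hcoeRO 1 n
    rwa [pow_one, pow_one] at this
  have hcoeρO : ∀ m n : ℕ,
      ((PowerSeries.coeff n (ρO ^ m) : intRing K) : K) = PowerSeries.coeff n ((ρ α) ^ m) := by
    intro m n
    have h : PowerSeries.coeff n (φ (ρO ^ m)) = PowerSeries.coeff n ((ρ α) ^ m) := by
      rw [map_pow, hρOdef, map_liftPS]
    rw [← h, hφdef, PowerSeries.coeff_map]
    rfl
  -- the functional equation at the level of the ring of integers
  have hEO : ∀ n : ℕ, ∑ m ∈ Finset.range (n+1),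
        PowerSeries.coeff m ΓO * PowerSeries.coeff n (RO ^ m)
      = ∑ m ∈ Finset.range (n+1),
        PowerSeries.coeff m RO * PowerSeries.coeff n (ρO ^ m) := by
    intro n
    apply Subtype.coe_injective
    push_cast
    calc (∑ m ∈ Finset.range (n+1),
          ((PowerSeries.coeff m ΓO : intRing K) : K)
            * ((PowerSeries.coeff n (RO ^ m) : intRing K) : K))
        = ∑ m ∈ Finset.range (n+1),
          PowerSeries.coeff m (Γ α) * PowerSeries.coeff n (R ^ m) := by
          refine Finset.sum_congr rfl fun m _ => ?_
          rw [hΓOdef, coeff_liftPS, hcoeRO]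
      _ = ∑ m ∈ Finset.range (n+1),
          PowerSeries.coeff m R * PowerSeries.coeff n ((ρ α) ^ m) := hEK n
      _ = ∑ m ∈ Finset.range (n+1),
          ((PowerSeries.coeff m RO : intRing K) : K)
            * ((PowerSeries.coeff n (ρO ^ m) : intRing K) : K) := by
          refine Finset.sum_congr rfl fun m _ => ?_
          rw [hcoeROc, hcoeρO]
  -- reductions mod the maximal ideal
  set Rb := PowerSeries.map π RO with hRbdef
  set Γb := PowerSeries.map π ΓO with hΓbdef
  have hρb : PowerSeries.map π ρO = (X : PowerSeries (resField K)) ^ q := by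
    ext n
    rw [PowerSeries.coeff_map, PowerSeries.coeff_X_pow]
    have h2' : (if n = q then (1 : resField K) else 0)
        = π (if n = q then 1 else 0) := by split <;> simp
    rw [h2']
    refine (Ideal.Quotient.eq).mpr ?_
    show ‖((PowerSeries.coeff n ρO - (if n = q then 1 else 0) : intRing K) : K)‖ < 1
    have hco : ((PowerSeries.coeff n ρO - (if n = q then 1 else 0) : intRing K) : K)
        = PowerSeries.coeff n (ρ α - X ^ q) := by
      push_cast
      rw [map_sub, PowerSeries.coeff_X_pow, hρOdef, coeff_liftPS]
      congr 1
      split <;> simp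
    rw [hco]
    exact hαq n
  have hEk : ∀ n : ℕ, ∑ m ∈ Finset.range (n+1),
        PowerSeries.coeff m Γb * PowerSeries.coeff n (Rb ^ m)
      = ∑ m ∈ Finset.range (n+1), PowerSeries.coeff m Rb
          * PowerSeries.coeff n (((X : PowerSeries (resField K)) ^ q) ^ m) := by
    intro n
    have hl : ∀ (F G : PowerSeries (intRing K)) (m : ℕ),
        PowerSeries.coeff m (PowerSeries.map π F)
          * PowerSeries.coeff n ((PowerSeries.map π G) ^ m)
        = π (PowerSeries.coeff m F * PowerSeries.coeff n (G ^ m)) := by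
      intro F G m
      rw [map_mul, PowerSeries.coeff_map, ← map_pow, PowerSeries.coeff_map]
    rw [← hρb, hRbdef, hΓbdef]
    simp only [hl]
    rw [← map_sum, ← map_sum, hEO n]
  -- the reduction of R has order exactly d
  have hRblow : ∀ n < d, PowerSeries.coeff n Rb = 0 := by
    intro n hn
    have h0 : PowerSeries.coeff n RO = 0 := by
      apply Subtype.coe_injective
      show ((PowerSeries.coeff n RO : intRing K) : K) = ((0 : intRing K) : K)
      rw [hcoeROc n, hRlow n hn, ZeroMemClass.coe_zero]
    rw [hRbdef, PowerSeries.coeff_map, h0, map_zero]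
  have hcne : PowerSeries.coeff d Rb ≠ 0 := by
    intro h0
    rw [hRbdef, PowerSeries.coeff_map] at h0
    have hmem : PowerSeries.coeff d RO ∈ intIdeal K :=
      Ideal.Quotient.eq_zero_iff_mem.mp h0
    have hlt : ‖((PowerSeries.coeff d RO : intRing K) : K)‖ < 1 := hmem
    rw [hcoeROc d, hRdnorm] at hlt
    norm_num at hlt
  have hXdRb : (X : PowerSeries (resField K)) ^ d ∣ Rb :=
    PowerSeries.X_pow_dvd_iff.mpr hRblow
  obtain ⟨Ub, hUb⟩ := hXdRb
  have hUb0 : PowerSeries.constantCoeff Ub = PowerSeries.coeff d Rb := by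
    have h := PowerSeries.coeff_X_pow_mul Ub d 0
    rw [zero_add] at h
    rw [hUb, h, PowerSeries.coeff_zero_eq_constantCoeff]
  have hRbpow : ∀ m n : ℕ, n < m * d → PowerSeries.coeff n (Rb ^ m) = 0 := by
    intro m n h
    have hdvd : (X : PowerSeries (resField K)) ^ (m * d) ∣ Rb ^ m := by
      rw [mul_comm, pow_mul]
      exact pow_dvd_pow_of_dvd ⟨Ub, hUb⟩ m
    exact PowerSeries.X_pow_dvd_iff.mp hdvd n h
  have hRbdiag : ∀ m : ℕ,
      PowerSeries.coeff (m * d) (Rb ^ m) = (PowerSeries.coeff d Rb) ^ m := by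
    intro m
    have h := PowerSeries.coeff_X_pow_mul (Ub ^ m) (d * m) 0
    rw [zero_add] at h
    calc PowerSeries.coeff (m * d) (Rb ^ m)
        = PowerSeries.coeff (d * m) ((X ^ d * Ub) ^ m) := by rw [hUb, mul_comm m d]
      _ = PowerSeries.coeff 0 (Ub ^ m) := by rw [mul_pow, ← pow_mul]; exact h
      _ = (PowerSeries.coeff d Rb) ^ m := by
          rw [PowerSeries.coeff_zero_eq_constantCoeff, map_pow, hUb0]
  -- `Rb ^ q` via the Frobenius on the residue field
  have hRbq : ∀ n : ℕ, PowerSeries.coeff n (Rb ^ q)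
      = if q ∣ n then PowerSeries.coeff (n / q) Rb else 0 := by
    intro n
    set P := trunc (n+1) Rb with hPdef
    have hdiff : (X : PowerSeries (resField K)) ^ (n+1) ∣ Rb - ↑P := by
      rw [PowerSeries.X_pow_dvd_iff]
      intro m hm
      rw [map_sub, Polynomial.coeff_coe, hPdef, coeff_trunc, if_pos hm, sub_self]
    have hdvd2 : (X : PowerSeries (resField K)) ^ (n+1)
        ∣ Rb ^ q - (↑P : PowerSeries (resField K)) ^ q :=
      dvd_trans hdiff (sub_dvd_pow_sub_pow Rb (↑P) q)
    have h1 : PowerSeries.coeff n (Rb ^ q)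
        = PowerSeries.coeff n ((↑P : PowerSeries (resField K)) ^ q) := by
      have h0 := PowerSeries.X_pow_dvd_iff.mp hdvd2 n (by omega)
      rw [map_sub] at h0
      exact sub_eq_zero.mp h0
    have hexp : (P : Polynomial (resField K)) ^ q = Polynomial.expand _ q P := by
      rw [← hcard]
      exact (FiniteField.expand_card P).symm
    rw [h1, ← Polynomial.coe_pow, hexp, Polynomial.coeff_coe,
      Polynomial.coeff_expand hqpos]
    split
    · rw [hPdef, coeff_trunc, if_pos (by have := Nat.div_le_self n q; omega)]
    · rfl
  have hRHSk : ∀ n : ℕ, ∑ m ∈ Finset.range (n+1), PowerSeries.coeff m Rb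
        * PowerSeries.coeff n (((X : PowerSeries (resField K)) ^ q) ^ m)
      = PowerSeries.coeff n (Rb ^ q) := by
    intro n
    rw [hRbq n]
    by_cases hdvd : q ∣ n
    · obtain ⟨m0, rfl⟩ := hdvd
      rw [if_pos ⟨m0, rfl⟩, Nat.mul_div_cancel_left m0 hqpos]
      rw [Finset.sum_eq_single m0]
      · rw [← pow_mul, PowerSeries.coeff_X_pow, if_pos (by ring), mul_one]
      · intro m hm hne
        rw [← pow_mul, PowerSeries.coeff_X_pow, if_neg, mul_zero]
        intro h
        exact hne (Nat.eq_of_mul_eq_mul_left hqpos (by omega))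
      · intro h
        exact absurd (Finset.mem_range.mpr
          (by nlinarith [Nat.le_mul_of_pos_left m0 hqpos])) h
    · rw [if_neg hdvd]
      refine Finset.sum_eq_zero fun m hm => ?_
      rw [← pow_mul, PowerSeries.coeff_X_pow, if_neg, mul_zero]
      intro h
      exact hdvd ⟨m, by omega⟩
  have hHH : ∀ n : ℕ, ∑ m ∈ Finset.range (n+1),
      PowerSeries.coeff m Γb * PowerSeries.coeff n (Rb ^ m)
      = PowerSeries.coeff n (Rb ^ q) := fun n => (hEk n).trans (hRHSk n)
  -- subtracting X^q and cancelling
  have hHH2 : ∀ n : ℕ, ∑ m ∈ Finset.range (n+1),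
      (PowerSeries.coeff m Γb - if m = q then 1 else 0)
        * PowerSeries.coeff n (Rb ^ m) = 0 := by
    intro n
    simp only [sub_mul, Finset.sum_sub_distrib]
    erw [Finset.sum_sub_distrib]
    erw [hHH n]
    simp only [ite_mul, one_mul, zero_mul]
    erw [Finset.sum_ite_eq' (Finset.range (n+1)) q
      (fun m => PowerSeries.coeff n (Rb ^ m))]
    split
    · exact sub_self _
    · rename_i hnotin
      have hnq : n < q := by
        by_contra h
        exact hnotin (Finset.mem_range.mpr (by omega))
      rw [hRbpow q n (by nlinarith), sub_zero]
  have hezero : ∀ n : ℕ,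
      PowerSeries.coeff n Γb - (if n = q then 1 else 0) = 0 := by
    intro n
    induction n using Nat.strong_induction_on with
    | _ n ih =>
      have h := hHH2 (n * d)
      rw [Finset.sum_eq_single n] at h
      · rw [hRbdiag n] at h
        exact (mul_eq_zero.mp h).resolve_right (pow_ne_zero n hcne)
      · intro m hm hne
        rcases Nat.lt_or_ge m n with hlt | hge
        · rw [ih m hlt, zero_mul]
        · have hml : n * d < m * d :=
            (Nat.mul_lt_mul_right (show 0 < d by omega)).mpr (by omega)
          rw [hRbpow m (n * d) hml, mul_zero]
      · intro hmem
        exact absurd (Finset.mem_range.mpr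
          (by nlinarith [Nat.le_mul_of_pos_right n (show 0 < d by omega)])) hmem
  -- translate back to norms
  intro n
  have h := hezero n
  rw [sub_eq_zero] at h
  have hπ1 : (if n = q then (1 : resField K) else 0) = π (if n = q then 1 else 0) := by
    split <;> simp
  rw [hΓbdef, PowerSeries.coeff_map, hπ1] at h
  have hmem : (PowerSeries.coeff n ΓO - (if n = q then 1 else 0) : intRing K)
      ∈ intIdeal K := Ideal.Quotient.eq.mp h
  have hlt : ‖((PowerSeries.coeff n ΓO - (if n = q then 1 else 0) : intRing K) : K)‖ < 1 :=
    hmem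
  have hco : ((PowerSeries.coeff n ΓO - (if n = q then 1 else 0) : intRing K) : K)
      = PowerSeries.coeff n (Γ α - X ^ q) := by
    have hsub : ((PowerSeries.coeff n ΓO - (if n = q then 1 else 0) : intRing K) : K)
        = ((PowerSeries.coeff n ΓO : intRing K) : K)
          - (((if n = q then 1 else 0) : intRing K) : K) := rfl
    rw [hsub, map_sub, PowerSeries.coeff_X_pow, hΓOdef, coeff_liftPS]
    congr 1
    split <;> simp
  rw [hco] at hlt
  exact hlt
end

section
/- Let E be a finite extension of ℚ_p, q > 1 an integer, and k_0 ≥ 1 an integer. Let L/E be a finite Galois totally ramified extension inside a fixed algebraic closure, let v ∈ O_L with L = E(v) and v_L(v) = k_0, and let π be a uniformizer of O_L with L = E(π). Let n ≥ 1 and suppose B' > 0 is a real constant such that for all σ ∈ Gal(L/E) with σ ≠ id one has v_L(σ(v) − v)/k_0 ≤ B'q^n. Then, with B := k_0(B' + 1), one has v_L(σ(π) − π) ≤ B q^n for all σ ∈ Gal(L/E) with σ ≠ id. -/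
/-- `π` is a uniformizer of the ring of integers of the nonarchimedean field `F`:
its norm is maximal among norms `< 1` of elements of `F`. -/
def IsUniformizerBase {F : Type*} [NormedField F] (π : F) : Prop :=
  0 < ‖π‖ ∧ ‖π‖ < 1 ∧ ∀ y : F, ‖y‖ < 1 → ‖y‖ ≤ ‖π‖

/-- Any `E`-algebra automorphism of a finite extension `L` of a complete nontrivially
normed field `E` (with compatible norms) is an isometry. -/
theorem aux_isometry {E L : Type*} [NormedField E] [NormedField L] [CompleteSpace E]
    [Algebra E L] [FiniteDimensional E L]
    (hEL : ∀ x : E, ‖algebraMap E L x‖ = ‖x‖) (hnt : ∃ a : E, 1 < ‖a‖)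
    (σ : L ≃ₐ[E] L) (x : L) : ‖σ x‖ = ‖x‖ := by
  letI : NontriviallyNormedField E := { ‹NormedField E› with non_trivial := hnt }
  letI : NormedSpace E L :=
    { norm_smul_le := fun a y => by rw [Algebra.smul_def, norm_mul, hEL] }
  have key : ∀ τ : L ≃ₐ[E] L, ∀ y : L, ‖τ y‖ ≤ ‖y‖ := by
    intro τ y
    have hcont : Continuous τ.toLinearMap := τ.toLinearMap.continuous_of_finiteDimensional
    obtain ⟨C, hC0, hC⟩ := SemilinearMapClass.bound_of_continuous τ.toLinearMap hcont
    rcases eq_or_ne y 0 with rfl | hy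
    · simp
    by_contra h
    push_neg at h
    have hy0 : 0 < ‖y‖ := norm_pos_iff.2 hy
    have hr : 1 < ‖τ y‖ / ‖y‖ := (one_lt_div hy0).2 h
    obtain ⟨k, hk⟩ := pow_unbounded_of_one_lt C hr
    have h1 := hC (y ^ k)
    have h1' : ‖τ y‖ ^ k ≤ C * ‖y‖ ^ k := by
      have : (τ.toLinearMap (y ^ k)) = (τ y) ^ k := by
        simp [AlgEquiv.toLinearMap_apply, map_pow]
      rwa [this, norm_pow, norm_pow] at h1
    have h2 : (‖τ y‖ / ‖y‖) ^ k ≤ C := by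
      rw [div_pow, div_le_iff₀ (by positivity)]
      linarith
    exact absurd h2 (not_le.2 hk)
  exact le_antisymm (key σ x) (by
    have h2 := key σ.symm (σ x)
    rwa [AlgEquiv.symm_apply_apply] at h2)

/-- In a field with a "uniformizer" `π`, every nonzero element has norm an integer
power of `‖π‖`. -/
theorem aux_valgroup {L : Type*} [NormedField L] {π : L} (hπ : IsUniformizerBase π)
    {y : L} (hy : y ≠ 0) : ∃ m : ℤ, ‖y‖ = ‖π‖ ^ m := by
  obtain ⟨hπ0, hπ1, hmax⟩ := hπ
  have hy0 : 0 < ‖y‖ := norm_pos_iff.2 hy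
  have hπne : π ≠ 0 := by
    intro h; rw [h, norm_zero] at hπ0; exact lt_irrefl 0 hπ0
  have hlogπ : Real.log ‖π‖ < 0 := Real.log_neg hπ0 hπ1
  set t : ℝ := Real.log ‖y‖ / Real.log ‖π‖ with ht
  have hyt : ‖y‖ = ‖π‖ ^ t := by
    rw [Real.rpow_def_of_pos hπ0, ht, mul_comm, div_mul_cancel₀ _ (ne_of_lt hlogπ), Real.exp_log hy0]
  refine ⟨⌊t⌋, ?_⟩
  have hrz : ‖π‖ ^ ((⌊t⌋ : ℝ)) = ‖π‖ ^ (⌊t⌋ : ℤ) := Real.rpow_intCast _ _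
  have h1 : ‖y‖ ≤ ‖π‖ ^ (⌊t⌋ : ℤ) := by
    rw [hyt, ← hrz]
    exact Real.rpow_le_rpow_of_exponent_ge hπ0 hπ1.le (Int.floor_le t)
  have h2 : ‖π‖ ^ ((⌊t⌋ : ℝ) + 1) < ‖y‖ := by
    rw [hyt]; exact Real.rpow_lt_rpow_of_exponent_gt hπ0 hπ1 (Int.lt_floor_add_one t)
  set u : L := y / π ^ (⌊t⌋ : ℤ) with hu
  have hπz : (0:ℝ) < ‖π‖ ^ (⌊t⌋ : ℤ) := zpow_pos hπ0 _
  have hun : ‖u‖ = ‖y‖ / ‖π‖ ^ (⌊t⌋ : ℤ) := by rw [hu, norm_div, norm_zpow]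
  have hle : ‖u‖ ≤ 1 := by rw [hun, div_le_one hπz]; exact h1
  have hgt : ‖π‖ < ‖u‖ := by
    rw [hun, lt_div_iff₀ hπz]
    calc ‖π‖ * ‖π‖ ^ (⌊t⌋ : ℤ) = ‖π‖ ^ ((⌊t⌋ : ℝ) + 1) := by
          rw [Real.rpow_add hπ0, Real.rpow_one, hrz]; ring
      _ < ‖y‖ := h2
  have hu1 : ‖u‖ = 1 := by
    rcases lt_or_eq_of_le hle with h | h
    · exact absurd (hmax u h) (not_le.2 hgt)
    · exact h
  have hyu : y = u * π ^ (⌊t⌋ : ℤ) := by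
    rw [hu, div_mul_cancel₀]
    exact zpow_ne_zero _ hπne
  rw [hyu, norm_mul, norm_zpow, hu1, one_mul]

theorem stmt_10 {p : ℕ} [Fact p.Prime] {E L : Type*} [NormedField E] [NormedField L]
    [CompleteSpace E] [CompleteSpace L] [IsUltrametricDist E] [IsUltrametricDist L]
    [Algebra ℚ_[p] E] [FiniteDimensional ℚ_[p] E]
    (hE : ∀ x : ℚ_[p], ‖algebraMap ℚ_[p] E x‖ = ‖x‖)
    -- `L/E` is a finite Galois extension, with compatible norms
    [Algebra E L] [FiniteDimensional E L] [IsGalois E L]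
    (hEL : ∀ x : E, ‖algebraMap E L x‖ = ‖x‖)
    -- `L/E` is totally ramified
    (htotram : ∀ πE : E, IsUniformizerBase πE → ∀ πL : L, IsUniformizerBase πL →
      ‖πL‖ ^ (Module.finrank E L) = ‖algebraMap E L πE‖)
    (q k₀ : ℕ) (hq : 1 < q) (hk₀ : 1 ≤ k₀)
    -- `v ∈ O_L` with `L = E(v)` and `v_L(v) = k₀`
    (v : L) (hvint : ‖v‖ ≤ 1) (hvgen : IntermediateField.adjoin E {v} = ⊤)
    -- `π` is a uniformizer of `O_L` with `L = E(π)`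
    (π : L) (hπ : IsUniformizerBase π) (hπgen : IntermediateField.adjoin E {π} = ⊤)
    (hvval : ‖v‖ = ‖π‖ ^ k₀)
    (n : ℕ) (hn : 1 ≤ n) (B' : ℝ) (hB' : 0 < B')
    -- `v_L(σ(v) - v)/k₀ ≤ B'q^n` for all `σ ≠ id`
    (hbound : ∀ σ : L ≃ₐ[E] L, σ ≠ 1 →
      ‖π‖ ^ ((k₀ : ℝ) * B' * (q : ℝ) ^ n) ≤ ‖σ v - v‖) :
    -- with `B = k₀(B' + 1)`, one has `v_L(σ(π) - π) ≤ Bq^n` for all `σ ≠ id`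
    ∀ σ : L ≃ₐ[E] L, σ ≠ 1 →
      ‖π‖ ^ ((k₀ : ℝ) * (B' + 1) * (q : ℝ) ^ n) ≤ ‖σ π - π‖ := by
  classical
  obtain ⟨hπ0, hπ1, hπmax⟩ := hπ
  set d := Module.finrank E L with hd
  -- `E` is nontrivially normed
  have hnt : ∃ a : E, 1 < ‖a‖ := by
    refine ⟨algebraMap ℚ_[p] E ((p : ℚ_[p]))⁻¹, ?_⟩
    rw [hE, norm_inv, Padic.norm_p, inv_inv]
    exact_mod_cast (Fact.out : p.Prime).one_lt
  have hiso : ∀ (σ : L ≃ₐ[E] L) (x : L), ‖σ x‖ = ‖x‖ := aux_isometry hEL hnt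
  have hvpos : 0 < ‖v‖ := by rw [hvval]; positivity
  have hv0 : v ≠ 0 := norm_pos_iff.1 hvpos
  -- positivity of exponents of norms < 1
  have hmpos : ∀ m : ℤ, ‖π‖ ^ m < 1 → 1 ≤ m := by
    intro m hm
    by_contra h
    push_neg at h
    have hm0 : m ≤ 0 := by omega
    have : (1:ℝ) ≤ ‖π‖ ^ m := one_le_zpow_of_nonpos₀ hπ0 hπ1.le hm0
    linarith
  -- the value group of `E` inside `‖π‖ ^ ℤ`
  have hPex : ∃ m : ℕ, 0 < m ∧ ∃ a : E, ‖algebraMap E L a‖ = ‖π‖ ^ (m : ℤ) := by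
    set a : E := algebraMap ℚ_[p] E (p : ℚ_[p]) with ha
    have han : ‖algebraMap E L a‖ = (p : ℝ)⁻¹ := by
      rw [hEL, ha, hE, Padic.norm_p]
    have hap : (0:ℝ) < ‖algebraMap E L a‖ := by
      rw [han]
      have := (Fact.out : p.Prime).pos
      positivity
    have halt : ‖algebraMap E L a‖ < 1 := by
      rw [han]
      have h2 : (1:ℝ) < (p:ℝ) := by exact_mod_cast (Fact.out : p.Prime).one_lt
      rw [inv_lt_one_iff₀]; right; exact h2
    obtain ⟨m, hm⟩ := aux_valgroup ⟨hπ0, hπ1, hπmax⟩ (norm_pos_iff.1 hap)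
    have hm1 : 1 ≤ m := hmpos m (by rw [← hm]; exact halt)
    refine ⟨m.toNat, by omega, a, ?_⟩
    rw [hm]
    congr 1
    omega
  set e := Nat.find hPex with he
  obtain ⟨he1, πE, hπE⟩ := Nat.find_spec hPex
  have hπEnormE : ‖πE‖ = ‖π‖ ^ (e : ℤ) := by rw [← hEL, hπE]
  have hπEpos : 0 < ‖πE‖ := by rw [hπEnormE]; exact zpow_pos hπ0 _
  have hπElt1 : ‖πE‖ < 1 := by
    rw [hπEnormE, zpow_natCast]
    exact pow_lt_one₀ hπ0.le hπ1 (by omega)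
  have huE : IsUniformizerBase πE := by
    refine ⟨hπEpos, hπElt1, ?_⟩
    intro y hy
    rcases eq_or_ne y 0 with rfl | hy0
    · simp [hπEpos.le]
    have hyL : algebraMap E L y ≠ 0 := by
      rw [← norm_pos_iff, hEL]
      exact norm_pos_iff.2 hy0
    obtain ⟨m, hm⟩ := aux_valgroup ⟨hπ0, hπ1, hπmax⟩ hyL
    have hyn : ‖y‖ = ‖π‖ ^ m := by rw [← hEL, hm]
    have hm1 : 1 ≤ m := hmpos m (by rw [← hyn]; exact hy)
    have hem : e ≤ m.toNat := Nat.find_min' hPex ⟨by omega, y, by rw [hm]; congr 1; omega⟩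
    have hem' : (e : ℤ) ≤ m := by omega
    rw [hyn, hπEnormE]
    exact zpow_le_zpow_right_of_le_one₀ hπ0 hπ1.le hem'
  -- total ramification : `e = d`
  have hed : e = d := by
    have h1 := htotram πE huE π ⟨hπ0, hπ1, hπmax⟩
    have h2 : ‖π‖ ^ d = ‖π‖ ^ e := by
      rw [h1, hπE, zpow_natCast]
    by_contra hne
    rcases Nat.lt_or_ge d e with h | h
    · have := pow_lt_pow_right_of_lt_one₀ hπ0 hπ1 h
      rw [h2] at this; exact lt_irrefl _ this
    · have h' : e < d := by omega
      have := pow_lt_pow_right_of_lt_one₀ hπ0 hπ1 h'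
      rw [h2] at this; exact lt_irrefl _ this
  -- value group of `E` is `‖π‖ ^ (d ℤ)`
  have hEgroup : ∀ a : E, a ≠ 0 → ∃ m : ℤ, ‖algebraMap E L a‖ = ‖π‖ ^ ((d : ℤ) * m) := by
    intro a ha
    obtain ⟨m, hm⟩ := aux_valgroup huE ha
    refine ⟨m, ?_⟩
    rw [hEL, hm, hπEnormE, ← zpow_mul, hed]
  -- `π` generates `L` as an `E`-algebra
  have hπint : IsIntegral E π := IsIntegral.of_finite E π
  have hadj : Algebra.adjoin E {π} = ⊤ := by
    have h := IntermediateField.adjoin_simple_toSubalgebra_of_isAlgebraic hπint.isAlgebraic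
    rw [show (IntermediateField.adjoin E {π} : IntermediateField E L) = ⊤ from hπgen] at h
    rw [← h]
    exact IntermediateField.top_toSubalgebra
  have hvmem : v ∈ (Polynomial.aeval π : Polynomial E →ₐ[E] L).range := by
    rw [← Algebra.adjoin_singleton_eq_range_aeval, hadj]
    trivial
  obtain ⟨f, hf⟩ := hvmem
  set g := minpoly E π with hg
  have hgm : g.Monic := minpoly.monic hπint
  set r := f %ₘ g with hrdef
  have hr : Polynomial.aeval π r = v := by
    have hsplit := Polynomial.modByMonic_add_div f g
    calc Polynomial.aeval π r
        = Polynomial.aeval π r + Polynomial.aeval π g * Polynomial.aeval π (f /ₘ g) := by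
          rw [hg, minpoly.aeval, zero_mul, add_zero]
      _ = Polynomial.aeval π f := by rw [← map_mul, ← map_add, hsplit]
      _ = v := hf
  have hr0 : r ≠ 0 := by
    intro h
    rw [h, map_zero] at hr
    exact hv0 hr.symm
  have hrd : r.natDegree < d := by
    have h1 := Polynomial.degree_modByMonic_lt f hgm
    have h2 := Polynomial.natDegree_lt_natDegree hr0 h1
    have h3 : g.natDegree = d := by
      have h4 := IntermediateField.adjoin.finrank hπint
      rw [hπgen] at h4
      rw [hg, ← h4, hd, IntermediateField.finrank_top']
    rw [hrdef] at h2 ⊢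
    omega
  -- expansion of `v` in powers of `π`
  set T : ℕ → L := fun i => algebraMap E L (r.coeff i) * π ^ i with hT
  have hsum : v = ∑ i ∈ r.support, T i := by
    conv_lhs => rw [← hr]
    rw [Polynomial.aeval_def, Polynomial.eval₂_eq_sum, Polynomial.sum_def]
  have hTnorm : ∀ i ∈ r.support, ∃ m : ℤ, ‖T i‖ = ‖π‖ ^ ((d : ℤ) * m + i) := by
    intro i hi
    have hc : r.coeff i ≠ 0 := Polynomial.mem_support_iff.mp hi
    obtain ⟨m, hm⟩ := hEgroup _ hc
    refine ⟨m, ?_⟩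
    rw [hT]
    simp only []
    rw [norm_mul, hm, norm_pow, ← zpow_natCast ‖π‖ i, ← zpow_add₀ (ne_of_gt hπ0)]
  have hTpos : ∀ i ∈ r.support, 0 < ‖T i‖ := by
    intro i hi
    obtain ⟨m, hm⟩ := hTnorm i hi
    rw [hm]
    exact zpow_pos hπ0 _
  have hinj : ∀ m m' : ℤ, ‖π‖ ^ m = ‖π‖ ^ m' → m = m' := by
    intro m m' h
    by_contra hne
    rcases lt_or_gt_of_ne hne with hlt | hlt
    · have := zpow_lt_zpow_right_of_lt_one₀ hπ0 hπ1 hlt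
      rw [h] at this; exact lt_irrefl _ this
    · have := zpow_lt_zpow_right_of_lt_one₀ hπ0 hπ1 hlt
      rw [h] at this; exact lt_irrefl _ this
  -- each term has norm at most `‖v‖`
  have hTle : ∀ i ∈ r.support, ‖T i‖ ≤ ‖v‖ := by
    obtain ⟨i₀, hi₀, hmax'⟩ := Finset.exists_max_image r.support (fun i => ‖T i‖)
      (Polynomial.support_nonempty.mpr hr0)
    have hstrict : ∀ i ∈ r.support, i ≠ i₀ → ‖T i‖ < ‖T i₀‖ := by
      intro i hi hne
      refine lt_of_le_of_ne (hmax' i hi) ?_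
      intro heq
      obtain ⟨m, hm⟩ := hTnorm i hi
      obtain ⟨m₀, hm₀⟩ := hTnorm i₀ hi₀
      rw [hm, hm₀] at heq
      have hexp := hinj _ _ heq
      have hdvd : (d : ℤ) ∣ ((i : ℤ) - (i₀ : ℤ)) := ⟨m₀ - m, by linarith⟩
      have hi' : i ≤ r.natDegree := Polynomial.le_natDegree_of_mem_supp i hi
      have hi₀' : i₀ ≤ r.natDegree := Polynomial.le_natDegree_of_mem_supp i₀ hi₀
      have habs : |(i : ℤ) - (i₀ : ℤ)| < (d : ℤ) := by
        rw [abs_lt]; omega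
      have := Int.eq_zero_of_abs_lt_dvd hdvd habs
      omega
    have hrest : ‖∑ i ∈ r.support.erase i₀, T i‖ < ‖T i₀‖ := by
      rcases (r.support.erase i₀).eq_empty_or_nonempty with h | h
      · rw [h, Finset.sum_empty, norm_zero]
        exact hTpos i₀ hi₀
      · obtain ⟨j, hj, hjmax⟩ := Finset.exists_max_image _ (fun i => ‖T i‖) h
        have hj' := Finset.mem_of_mem_erase hj
        calc ‖∑ i ∈ r.support.erase i₀, T i‖ ≤ ‖T j‖ :=
              IsUltrametricDist.norm_sum_le_of_forall_le_of_nonneg (norm_nonneg _) hjmax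
          _ < ‖T i₀‖ := hstrict j hj' (Finset.ne_of_mem_erase hj)
    have hveq : ‖v‖ = ‖T i₀‖ := by
      rw [hsum, ← Finset.add_sum_erase _ _ hi₀,
        IsUltrametricDist.norm_add_eq_max_of_norm_ne_norm (ne_of_gt hrest)]
      exact max_eq_left hrest.le |>.symm ▸ (max_eq_left hrest.le)
    intro i hi
    rw [hveq]
    exact hmax' i hi
  -- the main estimate
  intro σ hσ
  have hσπ : ‖σ π‖ = ‖π‖ := hiso σ π
  have hfac : ∀ i : ℕ, ‖(σ π) ^ i - π ^ i‖ ≤ ‖π‖ ^ (i - 1) * ‖σ π - π‖ := by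
    intro i
    rw [← geom_sum₂_mul (σ π) π i, norm_mul]
    apply mul_le_mul_of_nonneg_right _ (norm_nonneg _)
    apply IsUltrametricDist.norm_sum_le_of_forall_le_of_nonneg (by positivity)
    intro j hj
    rw [norm_mul, norm_pow, norm_pow, hσπ, ← pow_add]
    have hji : j < i := Finset.mem_range.mp hj
    have : j + (i - 1 - j) = i - 1 := by omega
    rw [this]
  have hterm : ∀ i ∈ r.support,
      ‖algebraMap E L (r.coeff i) * ((σ π) ^ i - π ^ i)‖ ≤ ‖σ π - π‖ := by
    intro i hi
    rcases Nat.eq_zero_or_pos i with rfl | hi1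
    · simp
    rw [norm_mul]
    have hc1 : ‖algebraMap E L (r.coeff i)‖ * ‖π‖ ^ (i - 1) ≤ 1 := by
      have h1 : ‖algebraMap E L (r.coeff i)‖ * ‖π‖ ^ i ≤ ‖π‖ ^ k₀ := by
        have h2 := hTle i hi
        rw [hvval] at h2
        rw [hT] at h2
        simpa [norm_mul, norm_pow] using h2
      have h3 : ‖π‖ ^ k₀ ≤ ‖π‖ := by
        calc ‖π‖ ^ k₀ ≤ ‖π‖ ^ 1 := by
              apply pow_le_pow_of_le_one hπ0.le hπ1.le hk₀
          _ = ‖π‖ := pow_one _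
      have h4 : ‖algebraMap E L (r.coeff i)‖ * ‖π‖ ^ (i - 1) * ‖π‖ ≤ 1 * ‖π‖ := by
        rw [one_mul, mul_assoc, ← pow_succ]
        have : i - 1 + 1 = i := by omega
        rw [this]
        exact h1.trans h3
      exact le_of_mul_le_mul_right (by simpa using h4) hπ0
    calc ‖algebraMap E L (r.coeff i)‖ * ‖(σ π) ^ i - π ^ i‖
        ≤ ‖algebraMap E L (r.coeff i)‖ * (‖π‖ ^ (i - 1) * ‖σ π - π‖) :=
          mul_le_mul_of_nonneg_left (hfac i) (norm_nonneg _)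
      _ = (‖algebraMap E L (r.coeff i)‖ * ‖π‖ ^ (i - 1)) * ‖σ π - π‖ := by ring
      _ ≤ 1 * ‖σ π - π‖ := mul_le_mul_of_nonneg_right hc1 (norm_nonneg _)
      _ = ‖σ π - π‖ := one_mul _
  have hsv : σ v - v = ∑ i ∈ r.support, algebraMap E L (r.coeff i) * ((σ π) ^ i - π ^ i) := by
    conv_lhs => rw [hsum]
    rw [map_sum, ← Finset.sum_sub_distrib]
    apply Finset.sum_congr rfl
    intro i hi
    rw [hT]
    simp only [map_mul, map_pow, AlgEquiv.commutes]
    ring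
  have hle1 : ‖σ v - v‖ ≤ ‖σ π - π‖ := by
    rw [hsv]
    exact IsUltrametricDist.norm_sum_le_of_forall_le_of_nonneg (norm_nonneg _) hterm
  calc ‖π‖ ^ ((k₀ : ℝ) * (B' + 1) * (q : ℝ) ^ n)
      ≤ ‖π‖ ^ ((k₀ : ℝ) * B' * (q : ℝ) ^ n) := by
        apply Real.rpow_le_rpow_of_exponent_ge hπ0 hπ1.le
        have hq0 : (0:ℝ) < (q : ℝ) ^ n := by positivity
        have hk : (1:ℝ) ≤ (k₀ : ℝ) := by exact_mod_cast hk₀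
        nlinarith
    _ ≤ ‖σ v - v‖ := hbound σ hσ
    _ ≤ ‖σ π - π‖ := hle1
end
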